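/- For every r \ge 2 there exists a taxon set X_r and a set of clusters C_r on X_r such that some phylogenetic network with exactly 2 reticulations represents C_r in the softwired sense, but every galled network representing C_r contains at least r reticulations. -/

import Mathlib

/-- A rooted phylogenetic network: a set of directed edges on vertex type `V`,
a root, and a partial labeling of vertices by taxa in `α`. -/
structure Network (V α : Type) where
  edges : Set (V × V)
  root : V
  label : V → Option α

namespace Network

variable {V α : Type}

/-- indegree of a vertex -/
noncomputable def indeg (N : Network V α) (v : V) : ℕ := {e ∈ N.edges | e.2 = v}.ncard

/-- outdegree of a vertex -/
noncomputable def outdeg (N : Network V α) (v : V) : ℕ := {e ∈ N.edges | e.1 = v}.ncard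

def IsLeaf (N : Network V α) (v : V) : Prop := N.outdeg v = 0

def IsReticulation (N : Network V α) (v : V) : Prop := 2 ≤ N.indeg v

/-- directed reachability within an edge set -/
def reachesIn (E' : Set (V × V)) (u v : V) : Prop :=
  Relation.ReflTransGen (fun a b => (a, b) ∈ E') u v

/-- `N` is a rooted phylogenetic network: finitely many edges, every vertex reachable
from the root, acyclic, the root has indegree 0, and the leaves are bijectively
labeled by the taxa. -/
def IsNetwork (N : Network V α) : Prop :=
  N.edges.Finite ∧
  (∀ v, reachesIn N.edges N.root v) ∧
  (∀ v, ¬ Relation.TransGen (fun a b => (a, b) ∈ N.edges) v v) ∧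
  N.indeg N.root = 0 ∧
  (∀ v, (N.label v).isSome ↔ N.IsLeaf v) ∧
  (∀ x : α, ∃! v, N.label v = some x)

/-- A switching keeps all tree edges and exactly one incoming edge per reticulation. -/
def Switching (N : Network V α) (E' : Set (V × V)) : Prop :=
  E' ⊆ N.edges ∧
  (∀ e ∈ N.edges, ¬ N.IsReticulation e.2 → e ∈ E') ∧
  (∀ v, N.IsReticulation v → {e ∈ E' | e.2 = v}.ncard = 1)

/-- The set of taxa labeling leaves reachable from `v` using only edges of `E'`. -/
def clusterIn (N : Network V α) (E' : Set (V × V)) (v : V) : Set α :=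
  {x | ∃ w, reachesIn E' v w ∧ N.label w = some x}

/-- Edge `e` represents cluster `C0` in the softwired sense. -/
def EdgeRepresents (N : Network V α) (e : V × V) (C0 : Set α) : Prop :=
  ∃ E', N.Switching E' ∧ e ∈ E' ∧ N.clusterIn E' e.2 = C0

/-- `N` represents cluster `C0` in the softwired sense. -/
def Represents (N : Network V α) (C0 : Set α) : Prop :=
  ∃ E', N.Switching E' ∧ ∃ e ∈ E', N.clusterIn E' e.2 = C0

def RepresentsAll (N : Network V α) (C : Set (Set α)) : Prop :=
  ∀ C0 ∈ C, N.Represents C0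

/-- undirected connectivity within an edge set -/
def symConn (E' : Set (V × V)) (a b : V) : Prop :=
  Relation.ReflTransGen (fun u w => (u, w) ∈ E' ∨ (w, u) ∈ E') a b

def IsCutEdge (N : Network V α) (e : V × V) : Prop :=
  e ∈ N.edges ∧ ¬ symConn (N.edges \ {e}) e.1 e.2

def vertsOf (B : Set (V × V)) : Set V := Prod.fst '' B ∪ Prod.snd '' B

def removeNode (B : Set (V × V)) (v : V) : Set (V × V) :=
  {e ∈ B | e.1 ≠ v ∧ e.2 ≠ v}

/-- An edge set is biconnected if it is (undirectedly) connected and remains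
connected after removing any single node. -/
def IsBiconnected (B : Set (V × V)) : Prop :=
  (∀ a ∈ vertsOf B, ∀ b ∈ vertsOf B, symConn B a b) ∧
  (∀ v : V, ∀ a ∈ vertsOf B, ∀ b ∈ vertsOf B, a ≠ v → b ≠ v →
    symConn (removeNode B v) a b)

/-- biconnected component: maximal nonempty biconnected edge subset -/
def IsBCC (N : Network V α) (B : Set (V × V)) : Prop :=
  B ⊆ N.edges ∧ B.Nonempty ∧ IsBiconnected B ∧
  ∀ B', B ⊆ B' → B' ⊆ N.edges → IsBiconnected B' → B' = B

/-- reticulation number of an edge set: |E| - |V| + 1 -/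
noncomputable def retNum (B : Set (V × V)) : ℕ := B.ncard + 1 - (vertsOf B).ncard

/-- level-k: every biconnected component has reticulation number at most k -/
def IsLevel (N : Network V α) (k : ℕ) : Prop := ∀ B, N.IsBCC B → retNum B ≤ k

/-- reticulation number of the whole network: sum over v of (indeg v - 1),
which equals |E| minus the number of vertices of positive indegree. -/
noncomputable def reticulationNumber (N : Network V α) : ℕ :=
  N.edges.ncard - {v | 0 < N.indeg v}.ncard

def IsBinary (N : Network V α) : Prop :=
  ∀ v, (N.indeg v ≤ 1 ∧ N.outdeg v ≤ 2) ∨ (N.indeg v ≤ 2 ∧ N.outdeg v ≤ 1)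

end Network

/-- Two clusters are compatible if disjoint or nested. -/
def ClCompatible {α : Type} (A B : Set α) : Prop := A ∩ B = ∅ ∨ A ⊆ B ∨ B ⊆ A

/-- Two sets are incompatible if neither disjoint nor nested. -/
def ClIncompatible {α : Type} (A B : Set α) : Prop :=
  (A ∩ B).Nonempty ∧ (A \ B).Nonempty ∧ (B \ A).Nonempty

/-- `S` is separated by the cluster set `C` if some cluster is incompatible with it. -/
def ClSeparated {α : Type} (C : Set (Set α)) (S : Set α) : Prop :=
  ∃ C0 ∈ C, ClIncompatible C0 S

/-- A galled network: no directed path within a single biconnected component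
connects two reticulations. -/
def Galled {V α : Type} (N : Network V α) : Prop :=
  ∀ B, N.IsBCC B → ∀ u v : V,
    u ∈ Network.vertsOf B → v ∈ Network.vertsOf B →
    N.IsReticulation u → N.IsReticulation v →
    ¬ Relation.TransGen (fun a b => (a, b) ∈ B) u v

namespace GNMR
open Network Relation Set

variable {V α : Type}

/-- comparability from unique predecessors -/
lemma comp_of_uniquePred {R : V → V → Prop}
    (hu : ∀ ⦃a a' b : V⦄, R a b → R a' b → a = a')
    {u v x : V} (h1 : ReflTransGen R u x) (h2 : ReflTransGen R v x) :
    ReflTransGen R u v ∨ ReflTransGen R v u := by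
  induction h1 with
  | refl => exact Or.inr h2
  | @tail b c hub hbc IH =>
    rcases h2.cases_tail with h | ⟨b', h2', hb'c⟩
    · subst h; exact Or.inl (hub.tail hbc)
    · cases hu hbc hb'c; exact IH h2'

section Basic

variable {N : Network V α}

lemma acyc (hN : N.IsNetwork) {a b : V}
    (h1 : reachesIn N.edges a b) (h2 : reachesIn N.edges b a) : a = b := by
  by_contra hne
  rcases (Relation.reflTransGen_iff_eq_or_transGen.mp h1) with h | h
  · exact hne h.symm
  · rcases (Relation.reflTransGen_iff_eq_or_transGen.mp h2) with h' | h'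
    · exact hne h'
    · exact hN.2.2.1 a (h.trans h')

lemma finiteV (hN : N.IsNetwork) : Finite V := by
  have h : (Set.univ : Set V) ⊆ insert N.root (Prod.snd '' N.edges) := by
    intro v _
    rcases (hN.2.1 v).cases_tail with h | ⟨c, _, hc⟩
    · exact h ▸ Set.mem_insert _ _
    · exact Set.mem_insert_of_mem _ ⟨(c, v), hc, rfl⟩
  exact Set.finite_univ_iff.mp (((hN.1.image _).insert _).subset h)

lemma wf_pred (hN : N.IsNetwork) : WellFounded (fun a b : V => (a, b) ∈ N.edges) := by
  have : Finite V := finiteV hN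
  have htr : IsTrans V (fun a b => Relation.TransGen (fun a b => (a,b) ∈ N.edges) a b) :=
    ⟨fun _ _ _ h h' => h.trans h'⟩
  have hirr : IsIrrefl V (fun a b => Relation.TransGen (fun a b => (a,b) ∈ N.edges) a b) :=
    ⟨hN.2.2.1⟩
  have hwf := Finite.wellFounded_of_trans_of_irrefl
    (fun a b => Relation.TransGen (fun a b => (a,b) ∈ N.edges) a b)
  exact Subrelation.wf (fun h => Relation.TransGen.single h) hwf

lemma wf_succ (hN : N.IsNetwork) : WellFounded (fun a b : V => (b, a) ∈ N.edges) := by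
  have : Finite V := finiteV hN
  have htr : IsTrans V (fun a b => Relation.TransGen (fun a b : V => (b,a) ∈ N.edges) a b) :=
    ⟨fun _ _ _ h h' => h.trans h'⟩
  have hirr : IsIrrefl V (fun a b => Relation.TransGen (fun a b : V => (b,a) ∈ N.edges) a b) :=
    ⟨by
      intro a ha
      exact hN.2.2.1 a ((Relation.transGen_swap).mp ha)⟩
  have hwf := Finite.wellFounded_of_trans_of_irrefl
    (fun a b => Relation.TransGen (fun a b : V => (b,a) ∈ N.edges) a b)
  exact Subrelation.wf (fun h => Relation.TransGen.single h) hwf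

lemma indegSet_finite (hN : N.IsNetwork) (v : V) : {e ∈ N.edges | e.2 = v}.Finite :=
  hN.1.subset (Set.sep_subset _ _)

lemma nonretic_uniquePred (hN : N.IsNetwork) {v : V} (hv : ¬ N.IsReticulation v)
    {a a' : V} (h : (a, v) ∈ N.edges) (h' : (a', v) ∈ N.edges) : a = a' := by
  by_contra hne
  apply hv
  have h2 : 1 < {e ∈ N.edges | e.2 = v}.ncard := by
    rw [Set.one_lt_ncard_iff (indegSet_finite hN v)]
    exact ⟨(a, v), (a', v), ⟨h, rfl⟩, ⟨h', rfl⟩, by simp [hne]⟩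
  exact h2

lemma in_edge_exists (hN : N.IsNetwork) {v : V} (hv : v ≠ N.root) :
    ∃ u, (u, v) ∈ N.edges := by
  rcases (hN.2.1 v).cases_tail with h | ⟨c, _, hc⟩
  · exact (hv h).elim
  · exact ⟨c, hc⟩

end Basic

section Sw

variable {N : Network V α} {E' : Set (V × V)}

lemma sw_uniquePred (hN : N.IsNetwork) (hS : N.Switching E')
    {a a' v : V} (h : (a, v) ∈ E') (h' : (a', v) ∈ E') : a = a' := by
  by_cases hv : N.IsReticulation v
  · obtain ⟨f, hf⟩ := Set.ncard_eq_one.mp (hS.2.2 v hv)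
    have h1 : (a, v) ∈ ({f} : Set (V × V)) := hf ▸ ⟨h, rfl⟩
    have h2 : (a', v) ∈ ({f} : Set (V × V)) := hf ▸ ⟨h', rfl⟩
    have := h1.trans h2.symm
    exact congrArg Prod.fst (h1.trans h2.symm)
  · exact nonretic_uniquePred hN hv (hS.1 h) (hS.1 h')

lemma sw_in_edge (hN : N.IsNetwork) (hS : N.Switching E') {v : V} (hv : v ≠ N.root) :
    ∃ u, (u, v) ∈ E' := by
  by_cases hret : N.IsReticulation v
  · have h1 := hS.2.2 v hret
    have hne : {e ∈ E' | e.2 = v}.Nonempty := by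
      rw [Set.nonempty_iff_ne_empty]
      intro h0
      rw [h0] at h1; simp at h1
    obtain ⟨⟨u, w⟩, hu, hw⟩ := hne
    exact ⟨u, (show w = v from hw) ▸ hu⟩
  · obtain ⟨u, hu⟩ := in_edge_exists hN hv
    exact ⟨u, hS.2.1 (u, v) hu hret⟩

lemma sw_spanning (hN : N.IsNetwork) (hS : N.Switching E') (v : V) :
    reachesIn E' N.root v := by
  induction v using (wf_pred hN).induction with
  | _ v IH =>
    by_cases hv : v = N.root
    · subst hv; exact .refl
    · obtain ⟨u, hu⟩ := sw_in_edge hN hS hv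
      exact (IH u (hS.1 hu)).tail hu

lemma sw_comparable (hN : N.IsNetwork) (hS : N.Switching E') {z z' x : V}
    (h1 : reachesIn E' z x) (h2 : reachesIn E' z' x) :
    reachesIn E' z z' ∨ reachesIn E' z' z :=
  comp_of_uniquePred (R := fun a b => (a, b) ∈ E') (fun _ _ _ h h' => sw_uniquePred hN hS h h') h1 h2

lemma cluster_mono (hS : N.Switching E') {z z' : V} (h : reachesIn E' z z') :
    N.clusterIn E' z' ⊆ N.clusterIn E' z := by
  rintro x ⟨w, hw, hl⟩
  exact ⟨w, h.trans hw, hl⟩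

lemma reach_mono {E₁ E₂ : Set (V × V)} (h : E₁ ⊆ E₂) {a b : V}
    (hr : reachesIn E₁ a b) : reachesIn E₂ a b :=
  Relation.ReflTransGen.mono (fun _ _ hx => h hx) _ _ hr

lemma cluster_sub (hS : N.Switching E') (z : V) :
    N.clusterIn E' z ⊆ N.clusterIn N.edges z := by
  rintro x ⟨w, hw, hl⟩
  exact ⟨w, reach_mono hS.1 hw, hl⟩

lemma cluster_mem_iff (hN : N.IsNetwork) (E'' : Set (V × V)) {z x : V} {t : α}
    (hℓ : N.label x = some t) :
    t ∈ N.clusterIn E'' z ↔ reachesIn E'' z x := by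
  constructor
  · rintro ⟨w, hw, hl⟩
    obtain ⟨v0, -, huniq⟩ := hN.2.2.2.2.2 t
    rwa [(huniq w hl).trans (huniq x hℓ).symm] at hw
  · intro h; exact ⟨x, h, hℓ⟩

/-- every vertex reaches a labeled leaf -/
lemma reach_leaf (hN : N.IsNetwork) (v : V) :
    ∃ w t, reachesIn N.edges v w ∧ N.label w = some t := by
  induction v using (wf_succ hN).induction with
  | _ v IH =>
    by_cases hl : N.IsLeaf v
    · have := (hN.2.2.2.2.1 v).mpr hl
      obtain ⟨t, ht⟩ := Option.isSome_iff_exists.mp this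
      exact ⟨v, t, .refl, ht⟩
    · have hne : {e ∈ N.edges | e.1 = v}.Nonempty := by
        rw [Set.nonempty_iff_ne_empty]
        intro h0
        exact hl (by unfold Network.IsLeaf Network.outdeg; rw [h0]; simp)
      obtain ⟨⟨a, b⟩, he, ha⟩ := hne
      subst ha
      obtain ⟨w, t, hw, ht⟩ := IH b he
      exact ⟨w, t, hw.head he, ht⟩

end Sw

end GNMR

namespace GNMR
open Network Relation Set List

variable {V α : Type}

/-! ### Trails -/

def pairsOf (l : List V) : Set (V × V) := {p | p ∈ l.zip l.tail}

structure Trail (S : Set (V × V)) (a b : V) (l : List V) : Prop where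
  ne : l ≠ []
  hd : l.head? = some a
  lst : l.getLast? = some b
  chain : l.Chain' (fun x y => (x, y) ∈ S)

section TrailLemmas

variable {S : Set (V × V)} {R : V → V → Prop}

lemma trail_of_reach {a b : V} (h : reachesIn S a b) : ∃ l, Trail S a b l := by
  induction h using Relation.ReflTransGen.head_induction_on with
  | refl => exact ⟨[b], by simp, by simp, by simp, List.isChain_singleton _⟩
  | @head x c hab hrest IH =>
    obtain ⟨l, hl⟩ := IH
    refine ⟨x :: l, by simp, by simp, ?_, ?_⟩
    · rw [List.getLast?_cons, hl.lst]; cases l <;> simp_all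
    · rcases l with _ | ⟨y, t⟩
      · exact absurd rfl hl.ne
      · have hyc : y = c := by simpa using hl.hd
        subst hyc
        exact List.IsChain.cons_cons hab hl.chain

lemma chain_head_reach : ∀ {l : List V} {a : V}, (a :: l).Chain' R →
    ∀ x ∈ a :: l, Relation.ReflTransGen R a x := by
  intro l
  induction l with
  | nil =>
    intro a _ x hx
    rcases List.mem_singleton.mp hx with rfl
    exact .refl
  | cons b t IH =>
    intro a hc x hx
    have h2 := List.isChain_cons_cons.mp hc
    rcases List.mem_cons.mp hx with rfl | hx
    · exact .refl
    · exact (IH h2.2 x hx).head h2.1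

lemma chain_reach_last : ∀ {l : List V} {a : V} (hc : (a :: l).Chain' R),
    ∀ x ∈ a :: l, Relation.ReflTransGen R x ((a :: l).getLast (by simp)) := by
  intro l
  induction l with
  | nil =>
    intro a _ x hx
    rcases List.mem_singleton.mp hx with rfl
    exact .refl
  | cons b t IH =>
    intro a hc x hx
    have h2 := List.isChain_cons_cons.mp hc
    have hlast : (a :: b :: t).getLast (by simp) = (b :: t).getLast (by simp) := by
      simp [List.getLast_cons]
    rw [hlast]
    rcases List.mem_cons.mp hx with rfl | hx
    · exact (IH h2.2 b (List.mem_cons_self)).head h2.1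
    · exact IH h2.2 x hx

lemma chain_pair_sublist : ∀ {l : List V}, l.Chain' R → ∀ {a b : V}, [a, b] <+ l →
    Relation.TransGen R a b := by
  intro l
  induction l with
  | nil => intro _ a b h; simp at h
  | cons x t IH =>
    intro hc a b h
    rcases List.sublist_cons_iff.mp h with h | ⟨r, hr, hrs⟩
    · exact IH hc.tail h
    · have hax : a = x := by injection hr
      have hrb : r = [b] := by injection hr with _ h2; exact h2.symm
      subst hax; subst hrb
      have hbt : b ∈ t := List.singleton_sublist.mp hrs
      have htne : t ≠ [] := by rintro rfl; simp at hbt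
      obtain ⟨hd0, tl0, rfl⟩ := List.exists_cons_of_ne_nil htne
      have h2 := List.isChain_cons_cons.mp hc
      exact Relation.TransGen.head' h2.1 (chain_head_reach h2.2 b hbt)

lemma pairs_mem_left {l : List V} {x y : V} (h : (x, y) ∈ pairsOf l) : x ∈ l :=
  (List.of_mem_zip h).1

lemma pairs_mem_right {l : List V} {x y : V} (h : (x, y) ∈ pairsOf l) : y ∈ l :=
  List.mem_of_mem_tail (List.of_mem_zip h).2

lemma pairs_cons_eq {a b : V} {t : List V} :
    pairsOf (a :: b :: t) = insert (a, b) (pairsOf (b :: t)) := by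
  ext p
  simp [pairsOf, List.zip_cons_cons]

lemma pairs_cons {l : List V} {a : V} : pairsOf l ⊆ pairsOf (a :: l) := by
  rintro p h
  rcases l with _ | ⟨b, t⟩
  · simp [pairsOf] at h
  · rw [pairs_cons_eq]; exact Set.mem_insert_of_mem _ h

lemma pairs_append_left {l1 l2 : List V} : pairsOf l2 ⊆ pairsOf (l1 ++ l2) := by
  induction l1 with
  | nil => simp
  | cons a t IH => exact fun p hp => pairs_cons (IH hp)

lemma pairs_suffix {l l' : List V} (h : l' <:+ l) : pairsOf l' ⊆ pairsOf l := by
  obtain ⟨pre, rfl⟩ := h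
  exact pairs_append_left

lemma pairs_chain_sub : ∀ {l : List V}, l.Chain' (fun x y => (x, y) ∈ S) →
    pairsOf l ⊆ S := by
  intro l
  induction l with
  | nil => intro _ p hp; simp [pairsOf] at hp
  | cons a t IH =>
    intro hc p hp
    rcases t with _ | ⟨b, t'⟩
    · simp [pairsOf] at hp
    · have h2 := List.isChain_cons_cons.mp hc
      rw [pairs_cons_eq] at hp
      rcases hp with rfl | hp
      · exact h2.1
      · exact IH h2.2 hp

lemma chain_pairs_self : ∀ (l : List V), l.Chain' (fun x y => (x, y) ∈ pairsOf l) := by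
  intro l
  induction l with
  | nil => exact List.isChain_nil
  | cons a t IH =>
    rcases t with _ | ⟨b, t'⟩
    · exact List.isChain_singleton _
    · refine List.isChain_cons_cons.mpr ⟨?_, ?_⟩
      · rw [pairs_cons_eq]; exact Set.mem_insert _ _
      · exact IH.imp (fun x y h => pairs_cons h)

lemma trail_cons_decomp {a b : V} {l : List V} (h : Trail S a b l) : l = a :: l.tail := by
  obtain ⟨hd0, tl0, rfl⟩ := List.exists_cons_of_ne_nil h.ne
  have : hd0 = a := by simpa using h.hd
  simp [this]

lemma trail_head_mem {a b : V} {l : List V} (h : Trail S a b l) : a ∈ l := by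
  rw [trail_cons_decomp h]; exact List.mem_cons_self

lemma trail_last_mem {a b : V} {l : List V} (h : Trail S a b l) : b ∈ l := by
  have hb : some (l.getLast h.ne) = some b := by
    rw [← List.getLast?_eq_getLast h.ne]; exact h.lst
  exact (Option.some.inj hb) ▸ List.getLast_mem h.ne

lemma trail_head_reach {a b : V} {l : List V} (h : Trail S a b l) {x : V} (hx : x ∈ l) :
    reachesIn S a x := by
  rw [trail_cons_decomp h] at hx
  exact chain_head_reach (trail_cons_decomp h ▸ h.chain) x hx

lemma trail_reach_last {a b : V} {l : List V} (h : Trail S a b l) {x : V} (hx : x ∈ l) :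
    reachesIn S x b := by
  have hdec := trail_cons_decomp h
  have hc := hdec ▸ h.chain
  have := chain_reach_last (R := fun x y => (x, y) ∈ S) hc x (hdec ▸ hx)
  have hlast : (a :: l.tail).getLast (by simp) = b := by
    have h1 : (a :: l.tail).getLast? = some b := by rw [← hdec]; exact h.lst
    rw [List.getLast?_eq_getLast (by simp)] at h1
    exact Option.some.inj h1
  rwa [hlast] at this

lemma trail_reach {a b : V} {l : List V} (h : Trail S a b l) : reachesIn S a b :=
  trail_reach_last h (trail_head_mem h)

end TrailLemmas

end GNMR

namespace GNMR
open Network Relation Set List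

variable {V α : Type}

section Trail2

variable {S : Set (V × V)} {N : Network V α}

lemma trail_nodup (hN : N.IsNetwork) {a b : V} {l : List V}
    (h : Trail N.edges a b l) : l.Nodup := by
  by_contra hnd
  obtain ⟨x, hx⟩ := List.exists_duplicate_iff_not_nodup.mpr hnd
  have hsub : [x, x] <+ l := List.duplicate_iff_sublist.mp hx
  exact hN.2.2.1 x (chain_pair_sublist h.chain hsub)

lemma trail_concat {a b c : V} {l1 l2 : List V}
    (h1 : Trail S a b l1) (h2 : Trail S b c l2) : Trail S a c (l1 ++ l2.tail) := by
  rcases eq_or_ne l2.tail [] with htl | htl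
  · have hbc : b = c := by
      obtain ⟨hd0, tl0, rfl⟩ := List.exists_cons_of_ne_nil h2.ne
      simp at htl
      subst htl
      have hb : hd0 = b := by simpa using h2.hd
      have hc : hd0 = c := by simpa using h2.lst
      exact hb ▸ hc
    subst hbc
    simpa [htl] using h1
  · refine ⟨by simp [h1.ne], ?_, ?_, ?_⟩
    · obtain ⟨hd0, tl0, rfl⟩ := List.exists_cons_of_ne_nil h1.ne
      simpa using h1.hd
    · rw [List.getLast?_append]
      have h3 : l2.tail.getLast? = some c := by
        obtain ⟨hd0, tl0, rfl⟩ := List.exists_cons_of_ne_nil h2.ne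
        simp only [List.tail_cons] at htl ⊢
        have hl := h2.lst
        rw [show hd0 :: tl0 = [hd0] ++ tl0 from rfl, List.getLast?_append] at hl
        obtain ⟨hd1, tl1, rfl⟩ := List.exists_cons_of_ne_nil htl
        rw [List.getLast?_eq_getLast (by simp)] at hl ⊢
        simpa using hl
      rw [h3]; rfl
    · refine List.isChain_append.mpr ?_
      refine ⟨h1.chain, h2.chain.tail, ?_⟩
      intro x hx y hy
      have hxb : x = b := by rw [h1.lst] at hx; exact (Option.some.inj hx.symm)
      obtain ⟨hd0, tl0, rfl⟩ := List.exists_cons_of_ne_nil h2.ne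
      have hb : hd0 = b := by simpa using h2.hd
      subst hb hxb
      simp only [List.tail_cons] at hy htl
      obtain ⟨hd1, tl1, rfl⟩ := List.exists_cons_of_ne_nil htl
      have hy1 : hd1 = y := by simpa using hy
      subst hy1
      exact (List.isChain_cons_cons.mp h2.chain).1

lemma trail_suffix {a b z : V} {l l' : List V}
    (h : Trail S a b l) (hsf : l' <:+ l) (hne : l' ≠ []) (hhd : l'.head? = some z) :
    Trail S z b l' := by
  obtain ⟨pre, rfl⟩ := hsf
  refine ⟨hne, hhd, ?_, ?_⟩
  · have hl := h.lst
    rw [List.getLast?_append] at hl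
    obtain ⟨hd0, tl0, rfl⟩ := List.exists_cons_of_ne_nil hne
    rw [List.getLast?_eq_getLast (by simp)] at hl ⊢
    simpa using hl
  · exact (List.isChain_append.mp h.chain).2.1

/-- extract a suffix whose head satisfies P and whose tail avoids P -/
lemma zsplit (P : V → Prop) : ∀ (A : List V), (∃ y ∈ A, P y) →
    ∃ z A', A' <:+ A ∧ A'.head? = some z ∧ P z ∧ ∀ y ∈ A'.tail, ¬ P y := by
  intro A
  induction A with
  | nil => rintro ⟨y, hy, -⟩; simp at hy
  | cons a t IH =>
    intro hex
    by_cases ht : ∃ y ∈ t, P y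
    · obtain ⟨z, A', hsf, hhd, hz, htl⟩ := IH ht
      exact ⟨z, A', hsf.trans (List.suffix_cons a t), hhd, hz, htl⟩
    · have hPa : P a := by
        obtain ⟨y, hy, hPy⟩ := hex
        rcases List.mem_cons.mp hy with rfl | hy
        · exact hPy
        · exact absurd ⟨y, hy, hPy⟩ ht
      exact ⟨a, a :: t, List.suffix_refl _, rfl, hPa,
        fun y hy hPy => ht ⟨y, by simpa using hy, hPy⟩⟩

lemma suffix_from_mem {z : V} : ∀ {A : List V}, z ∈ A →
    ∃ A', A' <:+ A ∧ A'.head? = some z := by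
  intro A
  induction A with
  | nil => intro h; simp at h
  | cons a t IH =>
    intro h
    rcases List.mem_cons.mp h with rfl | h
    · exact ⟨z :: t, List.suffix_refl _, rfl⟩
    · obtain ⟨A', hsf, hhd⟩ := IH h
      exact ⟨A', hsf.trans (List.suffix_cons a t), hhd⟩

lemma suffix_total {l s1 s2 : List V} (h1 : s1 <:+ l) (h2 : s2 <:+ l) :
    s1 <:+ s2 ∨ s2 <:+ s1 := by
  rcases le_total s1.length s2.length with h | h
  · left
    rw [List.suffix_iff_eq_drop] at h1 h2 ⊢
    rw [h1, h2]
    rw [List.drop_drop]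
    congr 1
    rw [h2]
    simp only [List.length_drop]
    omega
  · right
    rw [List.suffix_iff_eq_drop] at h1 h2 ⊢
    rw [h1, h2]
    rw [List.drop_drop]
    congr 1
    rw [h1]
    simp only [List.length_drop]
    omega

end Trail2

/-! ### symConn helpers -/

section Sym

variable {S : Set (V × V)}

lemma symConn_refl (a : V) : symConn S a a := .refl

lemma symConn_symm {a b : V} (h : symConn S a b) : symConn S b a :=
  by
    haveI : Std.Symm (fun u w : V => (u, w) ∈ S ∨ (w, u) ∈ S) := ⟨fun _ _ h => h.symm⟩
    exact Relation.ReflTransGen.stdSymm.symm _ _ h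

lemma symConn_trans {a b c : V} (h1 : symConn S a b) (h2 : symConn S b c) :
    symConn S a c := h1.trans h2

lemma symConn_mono {S' : Set (V × V)} (hsub : S ⊆ S') {a b : V} (h : symConn S a b) :
    symConn S' a b :=
  Relation.ReflTransGen.mono (fun _ _ hx => hx.imp (fun h => hsub h) (fun h => hsub h)) _ _ h

lemma symConn_of_edge {a b : V} (h : (a, b) ∈ S) : symConn S a b :=
  Relation.ReflTransGen.single (Or.inl h)

/-- walk along a list whose pairs are in S -/
lemma symConn_list {l : List V} (hsub : pairsOf l ⊆ S) {a : V} (hhd : l.head? = some a)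
    {x : V} (hx : x ∈ l) : symConn S a x := by
  have hne : l ≠ [] := by rintro rfl; simp at hhd
  obtain ⟨hd0, tl0, rfl⟩ := List.exists_cons_of_ne_nil hne
  have h0 : hd0 = a := by simpa using hhd
  have hc := chain_pairs_self (hd0 :: tl0)
  have hc2 : (hd0 :: tl0).Chain' (fun x y => (x, y) ∈ S ∨ (y, x) ∈ S) :=
    hc.imp (fun x y h => Or.inl (hsub h))
  have := chain_head_reach hc2 x hx
  rwa [h0] at this

lemma symConn_list_mem {l : List V} (hsub : pairsOf l ⊆ S) {x y : V}
    (hx : x ∈ l) (hy : y ∈ l) : symConn S x y := by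
  have hne : l ≠ [] := by rintro rfl; simp at hx
  obtain ⟨hd0, tl0, rfl⟩ := List.exists_cons_of_ne_nil hne
  exact symConn_trans (symConn_symm (symConn_list hsub rfl hx)) (symConn_list hsub rfl hy)

lemma pairs_removeNode {l : List V} {m : V} (hsub : pairsOf l ⊆ S) (hm : m ∉ l) :
    pairsOf l ⊆ Network.removeNode S m := by
  rintro ⟨x, y⟩ h
  exact ⟨hsub h, fun hx => hm (hx ▸ pairs_mem_left h), fun hy => hm (hy ▸ pairs_mem_right h)⟩

lemma removeNode_mem {m a b : V} (h : (a, b) ∈ S) (ha : a ≠ m) (hb : b ≠ m) :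
    (a, b) ∈ Network.removeNode S m := ⟨h, ha, hb⟩

lemma vertsOf_mem_left {B : Set (V × V)} {a b : V} (h : (a, b) ∈ B) :
    a ∈ Network.vertsOf B := Or.inl ⟨(a, b), h, rfl⟩

lemma vertsOf_mem_right {B : Set (V × V)} {a b : V} (h : (a, b) ∈ B) :
    b ∈ Network.vertsOf B := Or.inr ⟨(a, b), h, rfl⟩

end Sym

end GNMR

namespace GNMR
open Network Relation Set List

variable {V α : Type}

section Cycle

variable {S CY : Set (V × V)}

lemma mem_of_head? {l : List V} {a : V} (h : l.head? = some a) : a ∈ l := by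
  obtain ⟨hd0, tl0, rfl⟩ := List.exists_cons_of_ne_nil (by rintro rfl; simp at h : l ≠ [])
  have : hd0 = a := by simpa using h
  simp [this]

lemma cons_of_head? {l : List V} {a : V} (h : l.head? = some a) : l = a :: l.tail := by
  obtain ⟨hd0, tl0, rfl⟩ := List.exists_cons_of_ne_nil (by rintro rfl; simp at h : l ≠ [])
  have : hd0 = a := by simpa using h
  simp [this]

lemma mem_of_getLast? {l : List V} {b : V} (h : l.getLast? = some b) : b ∈ l := by
  have hne : l ≠ [] := by rintro rfl; simp at h
  rw [List.getLast?_eq_getLast hne] at h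
  exact (Option.some.inj h) ▸ List.getLast_mem hne

lemma getLast?_suffix {l l' : List V} (h : l' <:+ l) (hne : l' ≠ []) :
    l.getLast? = l'.getLast? := by
  obtain ⟨pre, rfl⟩ := h
  rw [List.getLast?_append]
  rw [List.getLast?_eq_getLast hne]
  rfl

lemma tail_not_mem_head {l : List V} {z : V} (hnd : l.Nodup) (h : l.head? = some z) :
    z ∉ l.tail := by
  rw [cons_of_head? h] at hnd
  exact (List.nodup_cons.mp hnd).1

lemma pairs_append_right : ∀ {l1 : List V} (l2 : List V), pairsOf l1 ⊆ pairsOf (l1 ++ l2) := by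
  intro l1
  induction l1 with
  | nil => intro l2 p hp; simp [pairsOf] at hp
  | cons a t IH =>
    intro l2 p hp
    rcases t with _ | ⟨b, t'⟩
    · simp [pairsOf] at hp
    · rw [pairs_cons_eq] at hp
      rcases hp with rfl | hp
      · rw [show (a :: b :: t') ++ l2 = a :: b :: (t' ++ l2) from rfl, pairs_cons_eq]
        exact Set.mem_insert _ _
      · rw [show (a :: b :: t') ++ l2 = a :: ((b :: t') ++ l2) from rfl]
        exact pairs_cons (IH l2 hp)

/-- arm connection when m is not on the arm -/
lemma arm_conn_out {m z x : V} {A : List V}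
    (hsubA : pairsOf A ⊆ CY) (hzA : z ∈ A) (hmA : m ∉ A) (hx : x ∈ A) :
    symConn (Network.removeNode CY m) x z :=
  symConn_list_mem (pairs_removeNode hsubA hmA) hx hzA

/-- arm connection when m is on the arm interior: route around via the other arm -/
lemma arm_conn_in {m z p q h' x : V} {A B : List V}
    (hsubA : pairsOf A ⊆ CY) (hsubB : pairsOf B ⊆ CY)
    (hpe : (p, h') ∈ CY) (hqe : (q, h') ∈ CY)
    (hAhd : A.head? = some z) (hAl : A.getLast? = some p)
    (hBz : z ∈ B) (hqB : q ∈ B)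
    (hAnd : A.Nodup) (hmA : m ∈ A.tail) (hmB : m ∉ B) (hmz : m ≠ z) (hh'A : h' ∉ A)
    (hx : x ∈ A) (hxm : x ≠ m) : symConn (Network.removeNode CY m) x z := by
  have hmA' : m ∈ A := List.mem_of_mem_tail hmA
  obtain ⟨l1, l2, hA12⟩ := List.append_of_mem hmA'
  have hnd := hA12 ▸ hAnd
  have hml1 : m ∉ l1 := by
    have := List.disjoint_of_nodup_append hnd
    intro hm; exact this hm (List.mem_cons_self)
  have hml2 : m ∉ l2 := by
    have h2 := (List.nodup_append.mp hnd).2.1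
    exact (List.nodup_cons.mp h2).1
  have hl1ne : l1 ≠ [] := by
    rintro rfl
    simp only [List.nil_append] at hA12
    rw [hA12] at hAhd
    exact hmz (by simpa using hAhd)
  have hl1hd : l1.head? = some z := by
    rw [hA12] at hAhd
    obtain ⟨hd0, tl0, rfl⟩ := List.exists_cons_of_ne_nil hl1ne
    simpa using hAhd
  have hzl1 : z ∈ l1 := mem_of_head? hl1hd
  have hmh' : m ≠ h' := fun hh => hh'A (hh ▸ hmA')
  -- route for elements of l2
  have hroute : ∀ y ∈ l2, symConn (Network.removeNode CY m) y z := by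
    intro y hy
    have hl2ne : l2 ≠ [] := by rintro rfl; simp at hy
    have hsfx : m :: l2 <:+ A := hA12 ▸ (List.suffix_append _ _)
    have hpl2 : l2.getLast? = some p := by
      have h1 := getLast?_suffix hsfx (by simp)
      rw [hAl] at h1
      rw [show (m :: l2).getLast? = l2.getLast? from (getLast?_suffix (List.suffix_cons m l2) hl2ne)] at h1
      exact h1.symm
    have hsubl2 : pairsOf l2 ⊆ Network.removeNode CY m :=
      pairs_removeNode (fun e he => hsubA (pairs_suffix hsfx (pairs_cons he))) hml2
    have hyp : symConn (Network.removeNode CY m) y p :=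
      symConn_list_mem hsubl2 hy (mem_of_getLast? hpl2)
    have hpm : p ≠ m := fun hh => hml2 (hh ▸ mem_of_getLast? hpl2)
    have hqm : q ≠ m := fun hh => hmB (hh ▸ hqB)
    have e1 : (p, h') ∈ Network.removeNode CY m := ⟨hpe, hpm, fun hh => hmh' hh.symm⟩
    have e2 : (q, h') ∈ Network.removeNode CY m := ⟨hqe, hqm, fun hh => hmh' hh.symm⟩
    have hBsub : pairsOf B ⊆ Network.removeNode CY m := pairs_removeNode hsubB hmB
    exact ((hyp.trans (symConn_of_edge e1)).trans (symConn_symm (symConn_of_edge e2))).trans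
      (symConn_list_mem hBsub hqB hBz)
  rw [hA12] at hx
  rcases List.mem_append.mp hx with hx1 | hx2
  · have hsubl1 : pairsOf l1 ⊆ Network.removeNode CY m :=
      pairs_removeNode (fun e he => hsubA (hA12 ▸ pairs_append_right _ he)) hml1
    exact symConn_list_mem hsubl1 hx1 hzl1
  · rcases List.mem_cons.mp hx2 with rfl | hx2
    · exact absurd rfl hxm
    · exact hroute x hx2

/-- arm connection when z is removed: go down to the end and jump to h' -/
lemma arm_conn_z {z p h' x : V} {A : List V}
    (hsubA : pairsOf A ⊆ CY) (hpe : (p, h') ∈ CY)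
    (hAhd : A.head? = some z) (hAl : A.getLast? = some p)
    (hAnd : A.Nodup) (hh'A : h' ∉ A)
    (hx : x ∈ A.tail) : symConn (Network.removeNode CY z) x h' := by
  have htne : A.tail ≠ [] := by intro h0; rw [h0] at hx; simp at hx
  have hsfx : A.tail <:+ A := List.tail_suffix A
  have hpl : A.tail.getLast? = some p := by
    have h1 := getLast?_suffix hsfx htne
    rw [hAl] at h1; exact h1.symm
  have hzt : z ∉ A.tail := tail_not_mem_head hAnd hAhd
  have hsub : pairsOf A.tail ⊆ Network.removeNode CY z :=
    pairs_removeNode (fun e he => hsubA (pairs_suffix hsfx he)) hzt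
  have hxp : symConn (Network.removeNode CY z) x p :=
    symConn_list_mem hsub hx (mem_of_getLast? hpl)
  have hpz : p ≠ z := fun hh => hzt (hh ▸ mem_of_getLast? hpl)
  have hh'z : h' ≠ z := fun hh => hh'A (hh ▸ mem_of_head? hAhd)
  exact hxp.trans (symConn_of_edge ⟨hpe, hpz, hh'z⟩)

lemma cycle_bicon {z p q h' : V} {A B : List V}
    (hAhd : A.head? = some z) (hAl : A.getLast? = some p)
    (hBhd : B.head? = some z) (hBl : B.getLast? = some q)
    (hAnd : A.Nodup) (hBnd : B.Nodup)
    (hdisj : ∀ y ∈ A.tail, y ∉ B)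
    (hh'A : h' ∉ A) (hh'B : h' ∉ B) :
    IsBiconnected (pairsOf A ∪ pairsOf B ∪ {(p, h'), (q, h')}) := by
  set CY : Set (V × V) := pairsOf A ∪ pairsOf B ∪ {(p, h'), (q, h')} with hCY
  have hsubA : pairsOf A ⊆ CY := fun e he => Or.inl (Or.inl he)
  have hsubB : pairsOf B ⊆ CY := fun e he => Or.inl (Or.inr he)
  have hpe : (p, h') ∈ CY := Or.inr (Or.inl rfl)
  have hqe : (q, h') ∈ CY := Or.inr (Or.inr rfl)
  have hzA : z ∈ A := mem_of_head? hAhd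
  have hzB : z ∈ B := mem_of_head? hBhd
  have hpA : p ∈ A := mem_of_getLast? hAl
  have hqB : q ∈ B := mem_of_getLast? hBl
  have hdisjB : ∀ y ∈ B.tail, y ∉ A := by
    intro y hy hyA
    have hyz : y ≠ z := fun hh => (tail_not_mem_head hBnd hBhd) (hh ▸ hy)
    have : y ∈ A.tail := by
      rw [cons_of_head? hAhd] at hyA
      rcases List.mem_cons.mp hyA with h | h
      · exact absurd h hyz
      · exact h
    exact hdisj y this (List.mem_of_mem_tail hy)
  have hmemCY : ∀ {e1 e2 : V}, (e1, e2) ∈ CY →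
      (e1 ∈ A ∨ e1 ∈ B ∨ e1 = h') ∧ (e2 ∈ A ∨ e2 ∈ B ∨ e2 = h') := by
    intro e1 e2 he
    rcases he with (hp | hp) | hp
    · exact ⟨Or.inl (pairs_mem_left hp), Or.inl (pairs_mem_right hp)⟩
    · exact ⟨Or.inr (Or.inl (pairs_mem_left hp)), Or.inr (Or.inl (pairs_mem_right hp))⟩
    · rw [Set.mem_insert_iff, Set.mem_singleton_iff] at hp
      rcases hp with hp | hp <;>
        (rw [Prod.ext_iff] at hp; obtain ⟨h1, h2⟩ := hp; subst h1; subst h2)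
      · exact ⟨Or.inl hpA, Or.inr (Or.inr rfl)⟩
      · exact ⟨Or.inr (Or.inl hqB), Or.inr (Or.inr rfl)⟩
  have hverts : Network.vertsOf CY ⊆ {x | x ∈ A ∨ x ∈ B ∨ x = h'} := by
    rintro v (⟨⟨e1, e2⟩, he, rfl⟩ | ⟨⟨e1, e2⟩, he, rfl⟩)
    · exact (hmemCY he).1
    · exact (hmemCY he).2
  -- connectivity to z without removal
  have hconn : ∀ x, x ∈ A ∨ x ∈ B ∨ x = h' → symConn CY x z := by
    rintro x (hx | hx | rfl)
    · exact symConn_list_mem hsubA hx hzA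
    · exact symConn_list_mem hsubB hx hzB
    · exact (symConn_symm (symConn_of_edge hpe)).trans (symConn_list_mem hsubA hpA hzA)
  classical
  -- connectivity to hub after removing m
  have hconnR : ∀ m x, x ∈ A ∨ x ∈ B ∨ x = h' → x ≠ m →
      symConn (Network.removeNode CY m) x (if m = z then h' else z) := by
    intro m x hx hxm
    by_cases hmz : m = z
    · subst hmz
      simp only [if_pos rfl]
      rcases hx with hx | hx | rfl
      · rcases List.mem_cons.mp (cons_of_head? hAhd ▸ hx) with rfl | hx'
        · exact absurd rfl hxm
        · exact arm_conn_z hsubA hpe hAhd hAl hAnd hh'A hx'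
      · rcases List.mem_cons.mp (cons_of_head? hBhd ▸ hx) with rfl | hx'
        · exact absurd rfl hxm
        · exact arm_conn_z hsubB hqe hBhd hBl hBnd hh'B hx'
      · exact symConn_refl _
    · simp only [if_neg hmz]
      by_cases hmh : m = h'
      · subst hmh
        rcases hx with hx | hx | rfl
        · exact arm_conn_out hsubA hzA hh'A hx
        · exact arm_conn_out hsubB hzB hh'B hx
        · exact absurd rfl hxm
      · rcases hx with hx | hx | hxh
        · by_cases hmA : m ∈ A
          · have hmA' : m ∈ A.tail := by
              rcases List.mem_cons.mp (cons_of_head? hAhd ▸ hmA) with h | h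
              · exact absurd h hmz
              · exact h
            exact arm_conn_in hsubA hsubB hpe hqe hAhd hAl hzB hqB hAnd hmA'
              (hdisj m hmA') hmz hh'A hx hxm
          · exact arm_conn_out hsubA hzA hmA hx
        · by_cases hmB : m ∈ B
          · have hmB' : m ∈ B.tail := by
              rcases List.mem_cons.mp (cons_of_head? hBhd ▸ hmB) with h | h
              · exact absurd h hmz
              · exact h
            exact arm_conn_in hsubB hsubA hqe hpe hBhd hBl hzA hpA hBnd hmB'
              (hdisjB m hmB') hmz hh'B hx hxm
          · exact arm_conn_out hsubB hzB hmB hx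
        · subst hxh
          by_cases hmA : m ∈ A
          · have hmB : m ∉ B := by
              rcases List.mem_cons.mp (cons_of_head? hAhd ▸ hmA) with h | h
              · exact absurd h hmz
              · exact hdisj m h
            have hqm : q ≠ m := fun hh => hmB (hh ▸ hqB)
            have e2 : (q, x) ∈ Network.removeNode CY m :=
              ⟨hqe, hqm, fun hh => hmh hh.symm⟩
            exact (symConn_symm (symConn_of_edge e2)).trans
              (arm_conn_out hsubB hzB hmB hqB)
          · have hpm : p ≠ m := fun hh => hmA (hh ▸ hpA)
            have e1 : (p, x) ∈ Network.removeNode CY m :=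
              ⟨hpe, hpm, fun hh => hmh hh.symm⟩
            exact (symConn_symm (symConn_of_edge e1)).trans
              (arm_conn_out hsubA hzA hmA hpA)
  constructor
  · intro a ha b hb
    exact (hconn a (hverts ha)).trans (symConn_symm (hconn b (hverts hb)))
  · intro m a ha b hb ham hbm
    exact (hconnR m a (hverts ha) ham).trans (symConn_symm (hconnR m b (hverts hb) hbm))

end Cycle

end GNMR

namespace GNMR
open Network Relation Set List

variable {V α : Type}

section GalledCore

variable {N : Network V α}

lemma pair_next {l : List V} {x b : V} (hlst : l.getLast? = some b) (hx : x ∈ l)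
    (hxb : x ≠ b) : ∃ y, (x, y) ∈ pairsOf l := by
  induction l with
  | nil => simp at hx
  | cons a t IH =>
    rcases List.mem_cons.mp hx with rfl | hx'
    · rcases t with _ | ⟨c, t'⟩
      · have : x = b := by simpa using hlst
        exact absurd this hxb
      · exact ⟨c, by rw [pairs_cons_eq]; exact Set.mem_insert _ _⟩
    · have htne : t ≠ [] := by rintro rfl; simp at hx'
      have hlst' : t.getLast? = some b := by
        rw [← hlst]
        exact (getLast?_suffix (List.suffix_cons a t) htne).symm
      obtain ⟨y, hy⟩ := IH hlst' hx'
      exact ⟨y, pairs_cons hy⟩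

lemma bcc_extend (hN : N.IsNetwork) {Θ : Set (V × V)} (hsub : Θ ⊆ N.edges)
    (hne : Θ.Nonempty) (hbc : IsBiconnected Θ) : ∃ B, N.IsBCC B ∧ Θ ⊆ B := by
  set C : Set (Set (V × V)) := {B | Θ ⊆ B ∧ B ⊆ N.edges ∧ IsBiconnected B} with hCdef
  have hfin : C.Finite := (hN.1.finite_subsets).subset (fun B hB => hB.2.1)
  have hne' : C.Nonempty := ⟨Θ, Set.Subset.rfl, hsub, hbc⟩
  obtain ⟨B, hB, hmax⟩ := Set.Finite.exists_maximalFor Set.ncard C hfin hne'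
  refine ⟨B, ⟨hB.2.1, hne.mono hB.1, hB.2.2, ?_⟩, hB.1⟩
  intro B' hBB' hB'sub hB'bc
  have hB'C : B' ∈ C := ⟨hB.1.trans hBB', hB'sub, hB'bc⟩
  have h1 : B.ncard ≤ B'.ncard := Set.ncard_le_ncard hBB' (hN.1.subset hB'sub)
  have h2 := hmax hB'C h1
  exact (Set.eq_of_subset_of_ncard_le hBB' h2 (hN.1.subset hB'sub)).symm

lemma no_retic_edge (hN : N.IsNetwork) (hG : Galled N) {u v : V}
    (hu : N.IsReticulation u) (hv : N.IsReticulation v) (he : (u, v) ∈ N.edges) :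
    False := by
  have huv : u ≠ v := by
    rintro rfl
    exact hN.2.2.1 u (Relation.TransGen.single he)
  have hverts : Network.vertsOf {(u, v)} ⊆ {u, v} := by
    rintro w (⟨e, he', rfl⟩ | ⟨e, he', rfl⟩) <;>
      (rw [Set.mem_singleton_iff] at he'; subst he')
    · exact Or.inl rfl
    · exact Or.inr rfl
  have hbc : IsBiconnected ({(u, v)} : Set (V × V)) := by
    constructor
    · intro a ha b hb
      have hconn : ∀ x ∈ Network.vertsOf ({(u, v)} : Set (V × V)),
          symConn {(u, v)} x u := by
        intro x hx
        rcases hverts hx with rfl | rfl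
        · exact symConn_refl _
        · exact symConn_symm (symConn_of_edge rfl)
      exact (hconn a ha).trans (symConn_symm (hconn b hb))
    · intro m a ha b hb ham hbm
      rcases hverts ha with rfl | rfl <;> rcases hverts hb with rfl | rfl
      · exact symConn_refl _
      · exact symConn_of_edge ⟨rfl, ham, hbm⟩
      · exact symConn_symm (symConn_of_edge ⟨rfl, hbm, ham⟩)
      · exact symConn_refl _
  obtain ⟨B, hB, hsubB⟩ := bcc_extend hN (Θ := {(u, v)}) (by simpa using he) ⟨(u, v), rfl⟩ hbc
  have hmem : (u, v) ∈ B := hsubB rfl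
  exact hG B hB u v (vertsOf_mem_left hmem) (vertsOf_mem_right hmem) hu hv
    (Relation.TransGen.single hmem)

lemma lemR (hN : N.IsNetwork) (hG : Galled N) {T h' p q : V}
    (hT : N.IsReticulation T) (hh' : N.IsReticulation h') (hneq : h' ≠ T)
    (hp : (p, h') ∈ N.edges) (hq : (q, h') ∈ N.edges)
    (hpT : reachesIn N.edges T p) (hpneT : p ≠ T)
    (hqT : ¬ reachesIn N.edges T q) : False := by
  obtain ⟨L1, hL1⟩ := trail_of_reach (hN.2.1 T)
  obtain ⟨L2, hL2⟩ := trail_of_reach hpT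
  obtain ⟨L3, hL3⟩ := trail_of_reach (hN.2.1 q)
  have hA : Trail N.edges N.root p (L1 ++ L2.tail) := trail_concat hL1 hL2
  set A := L1 ++ L2.tail with hAdef
  have hAnd : A.Nodup := trail_nodup hN hA
  have hL3nd : L3.Nodup := trail_nodup hN hL3
  have hL3reach : ∀ y ∈ L3, ¬ reachesIn N.edges T y := by
    intro y hy hTy
    exact hqT (hTy.trans (trail_reach_last hL3 hy))
  have hL2reach : ∀ y ∈ L2, reachesIn N.edges T y := fun y hy => trail_head_reach hL2 hy
  have hL2sfx : L2 <:+ A := by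
    have hlast : L1.getLast hL1.ne = T := by
      have h0 := List.getLast?_eq_getLast hL1.ne ▸ hL1.lst
      exact Option.some.inj h0
    have h1 : L1.dropLast ++ [T] = L1 := by
      have h2 := List.dropLast_append_getLast hL1.ne
      rw [hlast] at h2; exact h2
    have h2 : L2 = T :: L2.tail := trail_cons_decomp hL2
    refine ⟨L1.dropLast, ?_⟩
    rw [hAdef, ← h1, h2]
    simp
  have hrootA : N.root ∈ A := trail_head_mem hA
  have hrootL3 : N.root ∈ L3 := trail_head_mem hL3
  obtain ⟨z, A', hsfx, hhd, hzL3, htl⟩ := zsplit (· ∈ L3) A ⟨N.root, hrootA, hrootL3⟩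
  have hA'ne : A' ≠ [] := by rintro rfl; simp at hhd
  have hA' : Trail N.edges z p A' := trail_suffix hA hsfx hA'ne hhd
  have hzreach : ¬ reachesIn N.edges T z := hL3reach z hzL3
  have hTA' : T ∈ A' := by
    rcases suffix_total hsfx hL2sfx with hcase | hcase
    · exact absurd (hL2reach z (hcase.subset (mem_of_head? hhd))) hzreach
    · exact hcase.subset (trail_head_mem hL2)
  obtain ⟨B', hB'sfx, hB'hd⟩ := suffix_from_mem hzL3
  have hB'ne : B' ≠ [] := by rintro rfl; simp at hB'hd
  have hB' : Trail N.edges z q B' := trail_suffix hL3 hB'sfx hB'ne hB'hd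
  have hA'nd : A'.Nodup := hsfx.sublist.nodup hAnd
  have hB'nd : B'.Nodup := hB'sfx.sublist.nodup hL3nd
  have hdisj : ∀ y ∈ A'.tail, y ∉ B' := fun y hy hyB => htl y hy (hB'sfx.subset hyB)
  have hh'A : h' ∉ A' := by
    intro hmem
    exact hN.2.2.1 h' (Relation.TransGen.tail' (trail_reach_last hA' hmem) hp)
  have hh'B : h' ∉ B' := by
    intro hmem
    exact hN.2.2.1 h' (Relation.TransGen.tail' (trail_reach_last hB' hmem) hq)
  set CY : Set (V × V) := pairsOf A' ∪ pairsOf B' ∪ {(p, h'), (q, h')} with hCYdef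
  have hbc : IsBiconnected CY :=
    cycle_bicon hhd hA'.lst hB'hd hB'.lst hA'nd hB'nd hdisj hh'A hh'B
  have hCYsub : CY ⊆ N.edges := by
    rintro e ((he | he) | he)
    · exact pairs_chain_sub hA'.chain he
    · exact pairs_chain_sub hB'.chain he
    · rcases he with he | he
      · rw [he]; exact hp
      · rw [Set.mem_singleton_iff] at he; rw [he]; exact hq
  have hCYne : CY.Nonempty := ⟨(p, h'), Or.inr (Or.inl rfl)⟩
  obtain ⟨BB, hBB, hsubBB⟩ := bcc_extend hN hCYsub hCYne hbc
  have hTnep : T ≠ p := fun hh => hpneT hh.symm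
  obtain ⟨y, hy⟩ := pair_next hA'.lst hTA' hTnep
  have hTv : T ∈ Network.vertsOf BB := vertsOf_mem_left (hsubBB (Or.inl (Or.inl hy)))
  have hh'v : h' ∈ Network.vertsOf BB :=
    vertsOf_mem_right (hsubBB (Or.inr (Or.inl rfl)))
  have hchain : A'.Chain' (fun a b => (a, b) ∈ BB) :=
    (chain_pairs_self A').imp (fun a b hab => hsubBB (Or.inl (Or.inl hab)))
  have hreach : Relation.ReflTransGen (fun a b => (a, b) ∈ BB) T p := by
    have hdec := cons_of_head? hhd
    have hc2 := hdec ▸ hchain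
    have h3 := chain_reach_last (R := fun a b => (a, b) ∈ BB) hc2 T (hdec ▸ hTA')
    have hlast : (z :: A'.tail).getLast (by simp) = p := by
      have h1 : (z :: A'.tail).getLast? = some p := by rw [← hdec]; exact hA'.lst
      rw [List.getLast?_eq_getLast (by simp)] at h1
      exact Option.some.inj h1
    rwa [hlast] at h3
  have htg : Relation.TransGen (fun a b => (a, b) ∈ BB) T h' :=
    Relation.TransGen.tail' hreach (hsubBB (Or.inr (Or.inl rfl)))
  exact hG BB hBB T h' hTv hh'v hT hh' htg

end GalledCore

end GNMR

namespace GNMR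
open Network Relation Set List

variable {V α : Type}

section Rigidity

variable {N : Network V α} {E' : Set (V × V)}

/-- the full reachability set of a vertex -/
def rset (N : Network V α) (T : V) : Set V := {v | reachesIn N.edges T v}

lemma root_not_rset (hN : N.IsNetwork) {T : V} (hT : N.IsReticulation T) :
    N.root ∉ rset N T := by
  intro h
  rcases h.cases_tail with h0 | ⟨c, _, hc⟩
  · subst h0
    have := hN.2.2.2.1
    unfold Network.IsReticulation at hT
    unfold Network.indeg at hT this
    omega
  · have hpos : 0 < {e ∈ N.edges | e.2 = N.root}.ncard := by
      rw [Set.ncard_pos (indegSet_finite hN _)]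
      exact ⟨(c, N.root), hc, rfl⟩
    have := hN.2.2.2.1
    unfold Network.indeg at this
    omega

lemma cut_path (hN : N.IsNetwork) (hG : Galled N) (hS : N.Switching E')
    {T : V} (hT : N.IsReticulation T) :
    ∀ {a ℓ : V}, reachesIn E' a ℓ → a ∉ rset N T → ℓ ∈ rset N T → reachesIn E' T ℓ := by
  intro a ℓ h
  induction h using Relation.ReflTransGen.head_induction_on with
  | refl => exact fun ha hℓ => absurd hℓ ha
  | @head a b hab hbl IH =>
    intro ha hℓ
    by_cases hb : b ∈ rset N T
    · -- b is the first vertex in the blob; must equal T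
      have hbT : b = T := by
        by_contra hbT
        rcases (hb : reachesIn N.edges T b).cases_tail with h0 | ⟨x, hx, hxb⟩
        · exact hbT h0
        · have hax : a ≠ x := fun h0 => ha (h0 ▸ hx)
          have hbret : N.IsReticulation b := by
            have h2 : 1 < {e ∈ N.edges | e.2 = b}.ncard := by
              rw [Set.one_lt_ncard_iff (indegSet_finite hN b)]
              exact ⟨(a, b), (x, b), ⟨hS.1 hab, rfl⟩, ⟨hxb, rfl⟩, by simp [hax]⟩
            exact h2
          by_cases hxT : x = T
          · exact no_retic_edge hN hG hT hbret (hxT ▸ hxb)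
          · exact lemR hN hG hT hbret hbT hxb (hS.1 hab) hx hxT ha
      subst hbT
      exact hbl
    · exact IH hb hℓ

lemma blob_below (hN : N.IsNetwork) (hG : Galled N) (hS : N.Switching E')
    {T : V} (hT : N.IsReticulation T) {w : V} (hw : w ∈ rset N T) :
    reachesIn E' T w :=
  cut_path hN hG hS hT (sw_spanning hN hS w) (root_not_rset hN hT) hw

/-- rigidity: the cluster below a reticulation is the same in every switching -/
lemma rigid (hN : N.IsNetwork) (hG : Galled N) (hS : N.Switching E')
    {T : V} (hT : N.IsReticulation T) :
    N.clusterIn E' T = N.clusterIn N.edges T := by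
  ext x
  constructor
  · exact fun hx => cluster_sub hS T hx
  · rintro ⟨w, hw, hl⟩
    exact ⟨w, blob_below hN hG hS hT hw, hl⟩

/-- the fixed cluster of a reticulation is nested with or disjoint from
every cluster visible in any switching -/
lemma nd_compat (hN : N.IsNetwork) (hG : Galled N) (hS : N.Switching E')
    {T z : V} (hT : N.IsReticulation T) :
    N.clusterIn N.edges T ⊆ N.clusterIn E' z ∨
    N.clusterIn E' z ⊆ N.clusterIn N.edges T ∨
    N.clusterIn N.edges T ∩ N.clusterIn E' z = ∅ := by
  by_cases hint : (N.clusterIn N.edges T ∩ N.clusterIn E' z).Nonempty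
  · obtain ⟨x, hxT, hxz⟩ := hint
    obtain ⟨w, hw, hl⟩ := hxz
    have h1 : reachesIn E' z w := hw
    have h2 : reachesIn E' T w := by
      have hx' : x ∈ N.clusterIn E' T := (rigid hN hG hS hT) ▸ hxT
      exact (cluster_mem_iff hN E' hl).mp hx'
    rcases sw_comparable hN hS h1 h2 with hc | hc
    · left
      rw [← rigid hN hG hS hT]
      exact cluster_mono hS hc
    · right; left
      rw [← rigid hN hG hS hT]
      exact cluster_mono hS hc
  · right; right
    exact Set.not_nonempty_iff_eq_empty.mp hint

end Rigidity

end GNMR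

namespace GNMR

inductive Tax (r : ℕ) : Type
  | a (i : Fin r)
  | b (i : Fin r)
  | c (i : Fin r)
  | e
deriving DecidableEq

namespace Tax

variable {r : ℕ}

def Asuf (i : Fin r) : Set (Tax r) := fun x => match x with | .a j => i ≤ j | _ => False
def Bsuf (i : Fin r) : Set (Tax r) := fun x => match x with | .b j => i ≤ j | _ => False
def Csuf (i : Fin r) : Set (Tax r) := fun x => match x with | .c j => i ≤ j | _ => False
def Aall : Set (Tax r) := fun x => match x with | .a _ => True | _ => False
def Ball : Set (Tax r) := fun x => match x with | .b _ => True | _ => False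
def Call : Set (Tax r) := fun x => match x with | .c _ => True | _ => False
def Esing : Set (Tax r) := fun x => match x with | .e => True | _ => False

@[simp] lemma mem_Asuf_a {i j : Fin r} : a j ∈ Asuf i ↔ i ≤ j := Iff.rfl
@[simp] lemma mem_Asuf_b {i j : Fin r} : b j ∉ Asuf i := fun h => h
@[simp] lemma mem_Asuf_c {i j : Fin r} : c j ∉ Asuf i := fun h => h
@[simp] lemma mem_Asuf_e {i : Fin r} : e ∉ Asuf i := fun h => h
@[simp] lemma mem_Bsuf_b {i j : Fin r} : b j ∈ Bsuf i ↔ i ≤ j := Iff.rfl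
@[simp] lemma mem_Bsuf_a {i j : Fin r} : a j ∉ Bsuf i := fun h => h
@[simp] lemma mem_Bsuf_c {i j : Fin r} : c j ∉ Bsuf i := fun h => h
@[simp] lemma mem_Bsuf_e {i : Fin r} : e ∉ Bsuf i := fun h => h
@[simp] lemma mem_Csuf_c {i j : Fin r} : c j ∈ Csuf i ↔ i ≤ j := Iff.rfl
@[simp] lemma mem_Csuf_a {i j : Fin r} : a j ∉ Csuf i := fun h => h
@[simp] lemma mem_Csuf_b {i j : Fin r} : b j ∉ Csuf i := fun h => h
@[simp] lemma mem_Csuf_e {i : Fin r} : e ∉ Csuf i := fun h => h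
@[simp] lemma mem_Aall_a {j : Fin r} : a j ∈ Aall (r := r) := trivial
@[simp] lemma mem_Aall_b {j : Fin r} : b j ∉ Aall (r := r) := fun h => h
@[simp] lemma mem_Aall_c {j : Fin r} : c j ∉ Aall (r := r) := fun h => h
@[simp] lemma mem_Aall_e : e ∉ Aall (r := r) := fun h => h
@[simp] lemma mem_Ball_b {j : Fin r} : b j ∈ Ball (r := r) := trivial
@[simp] lemma mem_Ball_a {j : Fin r} : a j ∉ Ball (r := r) := fun h => h
@[simp] lemma mem_Ball_c {j : Fin r} : c j ∉ Ball (r := r) := fun h => h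
@[simp] lemma mem_Ball_e : e ∉ Ball (r := r) := fun h => h
@[simp] lemma mem_Call_c {j : Fin r} : c j ∈ Call (r := r) := trivial
@[simp] lemma mem_Call_a {j : Fin r} : a j ∉ Call (r := r) := fun h => h
@[simp] lemma mem_Call_b {j : Fin r} : b j ∉ Call (r := r) := fun h => h
@[simp] lemma mem_Call_e : e ∉ Call (r := r) := fun h => h
@[simp] lemma mem_Esing_e : e ∈ Esing (r := r) := trivial
@[simp] lemma mem_Esing_a {j : Fin r} : a j ∉ Esing (r := r) := fun h => h
@[simp] lemma mem_Esing_b {j : Fin r} : b j ∉ Esing (r := r) := fun h => h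
@[simp] lemma mem_Esing_c {j : Fin r} : c j ∉ Esing (r := r) := fun h => h

end Tax

open Tax

/-- the cluster family C_r -/
def Fam (r : ℕ) : Set (Set (Tax r)) :=
  {Z | (∃ i, Z = Asuf i ∪ Call) ∨ (∃ i, Z = Bsuf i) ∨ (∃ i, Z = Bsuf i ∪ Esing) ∨
       (∃ i, Z = Csuf i) ∨ (∃ i, Z = Csuf i ∪ Esing) ∨
       Z = Ball ∪ Call ∪ Esing}

section Class

variable {r : ℕ}

/-- the last index -/
def ilast (r : ℕ) (hr : 2 ≤ r) : Fin r := ⟨r - 1, by omega⟩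

lemma le_ilast (hr : 2 ≤ r) (j : Fin r) : j ≤ ilast r hr := by
  rw [Fin.le_def]
  have := j.isLt
  simp [ilast]
  omega

lemma univ_of_all {X : Set (Tax r)} (ha : ∀ j, Tax.a j ∈ X) (hb : ∀ j, Tax.b j ∈ X)
    (hc : ∀ j, Tax.c j ∈ X) (he : Tax.e ∈ X) : X = Set.univ := by
  ext x
  simp only [Set.mem_univ, iff_true]
  cases x with
  | a j => exact ha j
  | b j => exact hb j
  | c j => exact hc j
  | e => exact he

lemma KC_e (hr : 2 ≤ r) {X : Set (Tax r)}
    (hND : ∀ Z ∈ Fam r, X ⊆ Z ∨ Z ⊆ X ∨ X ∩ Z = ∅)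
    (he : Tax.e ∈ X) : X = Esing ∨ X = Set.univ := by
  have h1 := hND (Csuf (ilast r hr) ∪ Esing) (Or.inr (Or.inr (Or.inr (Or.inr (Or.inl ⟨_, rfl⟩)))))
  rcases h1 with h1 | h1 | h1
  · -- X ⊆ {c last, e}
    have h2 := hND (Bsuf (ilast r hr) ∪ Esing) (Or.inr (Or.inr (Or.inl ⟨_, rfl⟩)))
    rcases h2 with h2 | h2 | h2
    · left
      ext x
      constructor
      · intro hx
        have hx1 := h1 hx
        have hx2 := h2 hx
        cases x <;> simp_all
      · intro hx
        cases x <;> simp_all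
    · exfalso
      have hbX : Tax.b (ilast r hr) ∈ X := h2 (Or.inl (by simp))
      have := h1 hbX
      cases this <;> simp_all
    · exfalso
      have : Tax.e ∈ X ∩ (Bsuf (ilast r hr) ∪ Esing) := ⟨he, Or.inr (by simp)⟩
      rw [h2] at this
      exact this
  · -- {c last, e} ⊆ X : show X = univ
    right
    have hclast : Tax.c (ilast r hr) ∈ X := h1 (Or.inl (by simp))
    have hcs : ∀ j, Tax.c j ∈ X := by
      intro j
      have hC := hND (Csuf j) (Or.inr (Or.inr (Or.inr (Or.inl ⟨_, rfl⟩))))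
      rcases hC with hC | hC | hC
      · exact absurd (hC he) (by simp)
      · exact hC (by simp)
      · exfalso
        have : Tax.c (ilast r hr) ∈ X ∩ Csuf j := ⟨hclast, by simp [le_ilast hr j]⟩
        rw [hC] at this
        exact this
    have hbs : ∀ j, Tax.b j ∈ X := by
      intro j
      have hB := hND (Bsuf j ∪ Esing) (Or.inr (Or.inr (Or.inl ⟨_, rfl⟩)))
      rcases hB with hB | hB | hB
      · exact absurd (hB hclast) (by rintro (h | h) <;> simp_all)
      · exact hB (Or.inl (by simp))
      · exfalso
        have : Tax.e ∈ X ∩ (Bsuf j ∪ Esing) := ⟨he, Or.inr (by simp)⟩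
        rw [hB] at this
        exact this
    have has : ∀ j, Tax.a j ∈ X := by
      intro j
      have hA := hND (Asuf j ∪ Call) (Or.inl ⟨_, rfl⟩)
      rcases hA with hA | hA | hA
      · exact absurd (hA he) (by rintro (h | h) <;> simp_all)
      · exact hA (Or.inl (by simp))
      · exfalso
        have : Tax.c (ilast r hr) ∈ X ∩ (Asuf j ∪ Call) := ⟨hclast, Or.inr (by simp)⟩
        rw [hA] at this
        exact this
    exact univ_of_all has hbs hcs he
  · exfalso
    have : Tax.e ∈ X ∩ (Csuf (ilast r hr) ∪ Esing) := ⟨he, Or.inr (by simp)⟩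
    rw [h1] at this
    exact this

end Class

end GNMR

namespace GNMR
open Tax

section Class2

variable {r : ℕ}

lemma Esing_eq : Esing (r := r) = {Tax.e} := by
  ext x; cases x <;> simp [Set.mem_singleton_iff]

lemma KC_c (hr : 2 ≤ r) {X : Set (Tax r)}
    (hND : ∀ Z ∈ Fam r, X ⊆ Z ∨ Z ⊆ X ∨ X ∩ Z = ∅)
    {i : Fin r} (hci : Tax.c i ∈ X) : X = {Tax.c i} ∨ X = Set.univ := by
  have h1 := hND (Csuf i ∪ Esing) (Or.inr (Or.inr (Or.inr (Or.inr (Or.inl ⟨_, rfl⟩)))))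
  rcases h1 with h1 | h1 | h1
  · have heX : Tax.e ∉ X := by
      intro he
      rcases KC_e hr hND he with h | h
      · rw [h] at hci; simp at hci
      · rw [h] at h1
        have h2 := h1 (Set.mem_univ (Tax.b i))
        rcases h2 with h' | h' <;> simp_all
    left
    ext x
    simp only [Set.mem_singleton_iff]
    constructor
    · intro hx
      rcases h1 hx with hx1 | hx1
      · cases x with
        | c j =>
          have hij : i ≤ j := by simpa using hx1
          rcases eq_or_lt_of_le hij with heq | hlt
          · exact congrArg Tax.c heq.symm
          · exfalso
            have hjr : (i : ℕ) + 1 < r := by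
              have := j.isLt
              rw [Fin.lt_def] at hlt
              omega
            set isucc : Fin r := ⟨i.val + 1, hjr⟩ with his
            have h3 := hND (Csuf isucc ∪ Esing)
              (Or.inr (Or.inr (Or.inr (Or.inr (Or.inl ⟨_, rfl⟩)))))
            rcases h3 with h3 | h3 | h3
            · rcases h3 hci with h' | h'
              · have h4 : isucc ≤ i := by simpa using h'
                have h6 : (i : ℕ) + 1 ≤ (i : ℕ) := by simpa [his, Fin.le_def] using h4
                omega
              · simp at h'
            · exact heX (h3 (Or.inr (by simp)))
            · have h5 : Tax.c j ∈ X ∩ (Csuf isucc ∪ Esing) := by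
                refine ⟨hx, Or.inl ?_⟩
                rw [Fin.lt_def] at hlt
                show (isucc : ℕ) ≤ (j : ℕ)
                simp only [his]
                omega
              rw [h3] at h5; exact h5
        | a j => simp at hx1
        | b j => simp at hx1
        | e => simp at hx1
      · exfalso; cases x <;> simp_all
    · rintro rfl; exact hci
  · have he : Tax.e ∈ X := h1 (Or.inr (by simp))
    rcases KC_e hr hND he with h | h
    · rw [h] at hci; simp at hci
    · exact Or.inr h
  · exfalso
    have h5 : Tax.c i ∈ X ∩ (Csuf i ∪ Esing) := ⟨hci, Or.inl (by simp)⟩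
    rw [h1] at h5; exact h5

lemma KC_b (hr : 2 ≤ r) {X : Set (Tax r)}
    (hND : ∀ Z ∈ Fam r, X ⊆ Z ∨ Z ⊆ X ∨ X ∩ Z = ∅)
    {i : Fin r} (hbi : Tax.b i ∈ X) : X = {Tax.b i} ∨ X = Set.univ := by
  have h1 := hND (Bsuf i ∪ Esing) (Or.inr (Or.inr (Or.inl ⟨_, rfl⟩)))
  rcases h1 with h1 | h1 | h1
  · have heX : Tax.e ∉ X := by
      intro he
      rcases KC_e hr hND he with h | h
      · rw [h] at hbi; simp at hbi
      · rw [h] at h1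
        have h2 := h1 (Set.mem_univ (Tax.c i))
        rcases h2 with h' | h' <;> simp_all
    left
    ext x
    simp only [Set.mem_singleton_iff]
    constructor
    · intro hx
      rcases h1 hx with hx1 | hx1
      · cases x with
        | b j =>
          have hij : i ≤ j := by simpa using hx1
          rcases eq_or_lt_of_le hij with heq | hlt
          · exact congrArg Tax.b heq.symm
          · exfalso
            have hjr : (i : ℕ) + 1 < r := by
              have := j.isLt
              rw [Fin.lt_def] at hlt
              omega
            set isucc : Fin r := ⟨i.val + 1, hjr⟩ with his
            have h3 := hND (Bsuf isucc ∪ Esing) (Or.inr (Or.inr (Or.inl ⟨_, rfl⟩)))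
            rcases h3 with h3 | h3 | h3
            · rcases h3 hbi with h' | h'
              · have h4 : isucc ≤ i := by simpa using h'
                have h6 : (i : ℕ) + 1 ≤ (i : ℕ) := by simpa [his, Fin.le_def] using h4
                omega
              · simp at h'
            · exact heX (h3 (Or.inr (by simp)))
            · have h5 : Tax.b j ∈ X ∩ (Bsuf isucc ∪ Esing) := by
                refine ⟨hx, Or.inl ?_⟩
                rw [Fin.lt_def] at hlt
                show (isucc : ℕ) ≤ (j : ℕ)
                simp only [his]
                omega
              rw [h3] at h5; exact h5
        | a j => simp at hx1
        | c j => simp at hx1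
        | e => simp at hx1
      · exfalso; cases x <;> simp_all
    · rintro rfl; exact hbi
  · have he : Tax.e ∈ X := h1 (Or.inr (by simp))
    rcases KC_e hr hND he with h | h
    · rw [h] at hbi; simp at hbi
    · exact Or.inr h
  · exfalso
    have h5 : Tax.b i ∈ X ∩ (Bsuf i ∪ Esing) := ⟨hbi, Or.inl (by simp)⟩
    rw [h1] at h5; exact h5

lemma KC_a (hr : 2 ≤ r) {X : Set (Tax r)}
    (hND : ∀ Z ∈ Fam r, X ⊆ Z ∨ Z ⊆ X ∨ X ∩ Z = ∅)
    {i : Fin r} (hai : Tax.a i ∈ X) : X = {Tax.a i} ∨ X = Set.univ := by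
  have h1 := hND (Asuf i ∪ Call) (Or.inl ⟨_, rfl⟩)
  rcases h1 with h1 | h1 | h1
  · have hcX : ∀ k, Tax.c k ∉ X := by
      intro k hk
      rcases KC_c hr hND hk with h | h
      · rw [h] at hai; simp [Set.mem_singleton_iff] at hai
      · rw [h] at h1
        have h2 := h1 (Set.mem_univ Tax.e)
        rcases h2 with h' | h' <;> simp_all
    left
    ext x
    simp only [Set.mem_singleton_iff]
    constructor
    · intro hx
      rcases h1 hx with hx1 | hx1
      · cases x with
        | a j =>
          have hij : i ≤ j := by simpa using hx1
          rcases eq_or_lt_of_le hij with heq | hlt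
          · exact congrArg Tax.a heq.symm
          · exfalso
            have hjr : (i : ℕ) + 1 < r := by
              have := j.isLt
              rw [Fin.lt_def] at hlt
              omega
            set isucc : Fin r := ⟨i.val + 1, hjr⟩ with his
            have h3 := hND (Asuf isucc ∪ Call) (Or.inl ⟨_, rfl⟩)
            rcases h3 with h3 | h3 | h3
            · rcases h3 hai with h' | h'
              · have h4 : isucc ≤ i := by simpa using h'
                have h6 : (i : ℕ) + 1 ≤ (i : ℕ) := by simpa [his, Fin.le_def] using h4
                omega
              · simp at h'
            · exact hcX i (h3 (Or.inr (by simp)))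
            · have h5 : Tax.a j ∈ X ∩ (Asuf isucc ∪ Call) := by
                refine ⟨hx, Or.inl ?_⟩
                rw [Fin.lt_def] at hlt
                show (isucc : ℕ) ≤ (j : ℕ)
                simp only [his]
                omega
              rw [h3] at h5; exact h5
        | b j => simp at hx1
        | c j => simp at hx1
        | e => simp at hx1
      · exfalso; cases x with
        | c k => exact hcX k hx
        | a j => simp at hx1
        | b j => simp at hx1
        | e => simp at hx1
    · rintro rfl; exact hai
  · have hc0 : Tax.c i ∈ X := h1 (Or.inr (by simp))
    rcases KC_c hr hND hc0 with h | h
    · rw [h] at hai; simp [Set.mem_singleton_iff] at hai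
    · exact Or.inr h
  · exfalso
    have h5 : Tax.a i ∈ X ∩ (Asuf i ∪ Call) := ⟨hai, Or.inl (by simp)⟩
    rw [h1] at h5; exact h5

lemma KC (hr : 2 ≤ r) {X : Set (Tax r)}
    (hND : ∀ Z ∈ Fam r, X ⊆ Z ∨ Z ⊆ X ∨ X ∩ Z = ∅) :
    ∀ t ∈ X, X = Set.univ ∨ X = {t} := by
  intro t ht
  cases t with
  | a i => exact (KC_a hr hND ht).symm
  | b i => exact (KC_b hr hND ht).symm
  | c i => exact (KC_c hr hND ht).symm
  | e =>
    rcases KC_e hr hND ht with h | h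
    · exact Or.inr (h.trans Esing_eq)
    · exact Or.inl h

end Class2

end GNMR

namespace GNMR
open Network Relation Set

variable {V α : Type}

section Fix

variable {N : Network V α} {E : Set (V × V)}

def FixedTo (N : Network V α) (u x : V) : Prop :=
  Relation.ReflTransGen (fun a b => (a, b) ∈ N.edges ∧ ¬ N.IsReticulation b) u x

lemma fixedTo_reach (hS : N.Switching E) {u x : V} (h : FixedTo N u x) :
    reachesIn E u x :=
  Relation.ReflTransGen.mono (fun a b hab => hS.2.1 (a, b) hab.1 hab.2) _ _ h

lemma fixedTo_comparable (hN : N.IsNetwork) {z z' x : V}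
    (h1 : FixedTo N z x) (h2 : FixedTo N z' x) :
    FixedTo N z z' ∨ FixedTo N z' z :=
  comp_of_uniquePred (R := fun a b => (a, b) ∈ N.edges ∧ ¬ N.IsReticulation b)
    (fun _ _ _ hab ha'b => nonretic_uniquePred hN hab.2 hab.1 ha'b.1) h1 h2

lemma FIX (hN : N.IsNetwork) (hG : Galled N) (hS : N.Switching E) {z ℓx : V} {t : α}
    (hlab : N.label ℓx = some t)
    (hru : ∀ g, N.IsReticulation g → t ∈ N.clusterIn N.edges g →
        N.clusterIn N.edges g = Set.univ)
    (hproper : N.clusterIn E z ≠ Set.univ)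
    (hreach : reachesIn E z ℓx) : FixedTo N z ℓx := by
  suffices h : ∀ y, reachesIn E y ℓx → reachesIn E z y → FixedTo N y ℓx by
    exact h z hreach .refl
  intro y hyl
  induction hyl using Relation.ReflTransGen.head_induction_on with
  | refl => intro _; exact .refl
  | @head a b hab hbl IH =>
    intro hza
    have hzb : reachesIn E z b := hza.tail hab
    have hnr : ¬ N.IsReticulation b := by
      intro hret
      have htb : t ∈ N.clusterIn E b := ⟨ℓx, hbl, hlab⟩
      have h2 : N.clusterIn N.edges b = Set.univ := hru b hret (cluster_sub hS b htb)
      have h3 : N.clusterIn E b = Set.univ := (rigid hN hG hS hret).trans h2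
      have h4 : (Set.univ : Set α) ⊆ N.clusterIn E z := h3 ▸ cluster_mono hS hzb
      exact hproper (Set.eq_univ_of_univ_subset h4)
    exact (IH hzb).head ⟨hS.1 hab, hnr⟩

end Fix

end GNMR

namespace GNMR
open Network Relation Set Tax

theorem lowerBound {r : ℕ} (hr : 2 ≤ r) {W : Type} (N : Network W (Tax r))
    (hN : N.IsNetwork) (hG : Galled N) (hRep : N.RepresentsAll (Fam r)) :
    r ≤ N.reticulationNumber := by
  classical
  have hfinW : Finite W := finiteV hN
  have hND : ∀ g, N.IsReticulation g → ∀ Z ∈ Fam r,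
      N.clusterIn N.edges g ⊆ Z ∨ Z ⊆ N.clusterIn N.edges g ∨
      N.clusterIn N.edges g ∩ Z = ∅ := by
    intro g hg Z hZ
    obtain ⟨E', hS, f, hf, hcl⟩ := hRep Z hZ
    rw [← hcl]
    exact nd_compat hN hG hS hg
  have hKC : ∀ g, N.IsReticulation g → ∀ t ∈ N.clusterIn N.edges g,
      N.clusterIn N.edges g = Set.univ ∨ N.clusterIn N.edges g = {t} :=
    fun g hg => KC hr (hND g hg)
  set Sset : Set (Tax r) := {t | ∃ g, N.IsReticulation g ∧ N.clusterIn N.edges g = {t}}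
    with hSdef
  have hkey : ∀ t, t ∉ Sset → ∀ g, N.IsReticulation g → t ∈ N.clusterIn N.edges g →
      N.clusterIn N.edges g = Set.univ := by
    intro t ht g hg htg
    rcases hKC g hg t htg with h | h
    · exact h
    · exact absurd ⟨g, hg, h⟩ ht
  -- counting principle
  have hcount : ∀ (τ : Fin r → Tax r), Function.Injective τ → (∀ i, τ i ∈ Sset) →
      r ≤ N.reticulationNumber := by
    intro τ hinj hmem
    choose g hgret hgcl using fun i => hmem i
    have hginj : Function.Injective g := by
      intro i j hij
      have h0 : ({τ i} : Set (Tax r)) = {τ j} := by rw [← hgcl i, ← hgcl j, hij]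
      exact hinj (Set.singleton_eq_singleton_iff.mp h0)
    set P : Set W := {v | 0 < N.indeg v} with hPdef
    have hgP : ∀ i, g i ∈ P := by
      intro i
      have := hgret i
      unfold Network.IsReticulation at this
      simp only [hPdef, Set.mem_setOf_eq]
      omega
    have hsel1 : ∀ v : ↥P, ∃ ed : W × W, ed ∈ N.edges ∧ ed.2 = (v : W) := by
      rintro ⟨v, hv⟩
      have hne : {e ∈ N.edges | e.2 = v}.Nonempty :=
        (Set.ncard_pos (indegSet_finite hN v)).mp hv
      obtain ⟨ed, hed⟩ := hne
      exact ⟨ed, hed.1, hed.2⟩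
    choose pe hpe hpes using hsel1
    have hsel2 : ∀ i : Fin r, ∃ ed ed' : W × W, ed ∈ N.edges ∧ ed' ∈ N.edges ∧
        ed.2 = g i ∧ ed'.2 = g i ∧ ed ≠ ed' := by
      intro i
      have h2 : 1 < {e ∈ N.edges | e.2 = g i}.ncard := hgret i
      rw [Set.one_lt_ncard_iff (indegSet_finite hN _)] at h2
      obtain ⟨ed, ed', ⟨h1, h2'⟩, ⟨h3, h4⟩, hne⟩ := h2
      exact ⟨ed, ed', h1, h3, h2', h4, hne⟩
    choose d1 d2 hd1 hd2 hd1s hd2s hdne using hsel2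
    let F : (Fin r) ⊕ (↥P) → ↥N.edges := fun s =>
      match s with
      | Sum.inl i =>
          if d1 i = pe ⟨g i, hgP i⟩ then ⟨d2 i, hd2 i⟩ else ⟨d1 i, hd1 i⟩
      | Sum.inr v => ⟨pe v, hpe v⟩
    have hFsnd_l : ∀ i, (F (Sum.inl i) : W × W).2 = g i := by
      intro i
      by_cases h : d1 i = pe ⟨g i, hgP i⟩ <;> simp [F, h, hd1s, hd2s]
    have hFsnd_r : ∀ v : ↥P, (F (Sum.inr v) : W × W).2 = (v : W) := fun v => hpes v
    have hinjF : Function.Injective F := by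
      intro s s' hss
      rcases s with i | v <;> rcases s' with i' | v'
      · have h1 : g i = g i' := by
          rw [← hFsnd_l i, ← hFsnd_l i', hss]
        exact congrArg Sum.inl (hginj h1)
      · exfalso
        have hv : (v' : W) = g i := by rw [← hFsnd_r v', ← hss, hFsnd_l]
        have hv' : v' = ⟨g i, hgP i⟩ := Subtype.ext hv
        by_cases h : d1 i = pe ⟨g i, hgP i⟩
        · have : (F (Sum.inl i) : W × W) = d2 i := by simp [F, h]
          have h2 : d2 i = pe ⟨g i, hgP i⟩ := by
            rw [← this, hss]; simp [F, hv']
          exact hdne i (h.trans h2.symm)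
        · have : (F (Sum.inl i) : W × W) = d1 i := by simp [F, h]
          apply h
          rw [← this, hss]; simp [F, hv']
      · exfalso
        have hv : (v : W) = g i' := by rw [← hFsnd_r v, hss, hFsnd_l]
        have hv' : v = ⟨g i', hgP i'⟩ := Subtype.ext hv
        by_cases h : d1 i' = pe ⟨g i', hgP i'⟩
        · have : (F (Sum.inl i') : W × W) = d2 i' := by simp [F, h]
          have h2 : d2 i' = pe ⟨g i', hgP i'⟩ := by
            rw [← this, ← hss]; simp [F, hv']
          exact hdne i' (h.trans h2.symm)
        · have : (F (Sum.inl i') : W × W) = d1 i' := by simp [F, h]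
          apply h
          rw [← this, ← hss]; simp [F, hv']
      · have h1 : (v : W) = (v' : W) := by
          rw [← hFsnd_r v, ← hFsnd_r v', hss]
        exact congrArg Sum.inr (Subtype.ext h1)
    have hEfin : Finite ↥N.edges := hN.1.to_subtype
    have hcard := Nat.card_le_card_of_injective F hinjF
    rw [Nat.card_sum] at hcard
    rw [Nat.card_eq_fintype_card, Fintype.card_fin] at hcard
    rw [Nat.card_coe_set_eq, Nat.card_coe_set_eq] at hcard
    unfold Network.reticulationNumber
    exact Nat.le_sub_of_add_le hcard
  -- case analysis
  by_cases hall : ∀ i : Fin r, Tax.c i ∈ Sset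
  · exact hcount (fun i => Tax.c i) (fun i j h => by injection h) hall
  · push_neg at hall
    obtain ⟨i0, hi0⟩ := hall
    obtain ⟨E1, hS1, f1, hf1, hcl1⟩ :=
      hRep (Asuf ⟨0, by omega⟩ ∪ Call) (Or.inl ⟨_, rfl⟩)
    obtain ⟨E2, hS2, f2, hf2, hcl2⟩ :=
      hRep (Ball ∪ Call ∪ Esing) (Or.inr (Or.inr (Or.inr (Or.inr (Or.inr rfl)))))
    obtain ⟨ℓt, hℓt, -⟩ := hN.2.2.2.2.2 (Tax.c i0)
    have hZ1prop : (Asuf (⟨0, by omega⟩ : Fin r) ∪ Call) ≠ Set.univ := by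
      intro h
      have h2 : Tax.e ∈ Asuf (⟨0, by omega⟩ : Fin r) ∪ Call := h ▸ Set.mem_univ _
      rcases h2 with h' | h' <;> simp_all
    have hZ2prop : (Ball ∪ Call ∪ Esing : Set (Tax r)) ≠ Set.univ := by
      intro h
      have h2 : Tax.a i0 ∈ Ball ∪ Call ∪ Esing := h ▸ Set.mem_univ _
      rcases h2 with (h' | h') | h' <;> simp_all
    have hfix1 : FixedTo N f1.2 ℓt := by
      refine FIX hN hG hS1 hℓt (hkey _ hi0) (hcl1 ▸ hZ1prop) ?_
      have hmem : Tax.c i0 ∈ N.clusterIn E1 f1.2 := by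
        rw [hcl1]; exact Or.inr (by simp)
      exact (cluster_mem_iff hN E1 hℓt).mp hmem
    have hfix2 : FixedTo N f2.2 ℓt := by
      refine FIX hN hG hS2 hℓt (hkey _ hi0) (hcl2 ▸ hZ2prop) ?_
      have hmem : Tax.c i0 ∈ N.clusterIn E2 f2.2 := by
        rw [hcl2]; exact Or.inl (Or.inr (by simp))
      exact (cluster_mem_iff hN E2 hℓt).mp hmem
    rcases fixedTo_comparable hN hfix1 hfix2 with hcmp | hcmp
    · -- f1.2 above f2.2 : all b's are in Sset
      have hbS : ∀ j : Fin r, Tax.b j ∈ Sset := by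
        intro j
        by_contra hbj
        obtain ⟨ℓs, hℓs, -⟩ := hN.2.2.2.2.2 (Tax.b j)
        have hsZ2 : Tax.b j ∈ N.clusterIn E2 f2.2 := by
          rw [hcl2]; exact Or.inl (Or.inl (by simp))
        have hfixs : FixedTo N f2.2 ℓs :=
          FIX hN hG hS2 hℓs (hkey _ hbj) (hcl2 ▸ hZ2prop)
            ((cluster_mem_iff hN E2 hℓs).mp hsZ2)
        have h3 : Tax.b j ∈ N.clusterIn E1 f1.2 :=
          ⟨ℓs, (fixedTo_reach hS1 hcmp).trans (fixedTo_reach hS1 hfixs), hℓs⟩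
        rw [hcl1] at h3
        rcases h3 with h' | h' <;> simp_all
      exact hcount (fun j => Tax.b j) (fun i j h => by injection h) hbS
    · -- f2.2 above f1.2 : all a's are in Sset
      have haS : ∀ j : Fin r, Tax.a j ∈ Sset := by
        intro j
        by_contra haj
        obtain ⟨ℓs, hℓs, -⟩ := hN.2.2.2.2.2 (Tax.a j)
        have hsZ1 : Tax.a j ∈ N.clusterIn E1 f1.2 := by
          rw [hcl1]
          exact Or.inl (by simp [Fin.le_def])
        have hfixs : FixedTo N f1.2 ℓs :=
          FIX hN hG hS1 hℓs (hkey _ haj) (hcl1 ▸ hZ1prop)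
            ((cluster_mem_iff hN E1 hℓs).mp hsZ1)
        have h3 : Tax.a j ∈ N.clusterIn E2 f2.2 :=
          ⟨ℓs, (fixedTo_reach hS2 hcmp).trans (fixedTo_reach hS2 hfixs), hℓs⟩
        rw [hcl2] at h3
        rcases h3 with (h' | h') | h' <;> simp_all
      exact hcount (fun j => Tax.a j) (fun i j h => by injection h) haS

end GNMR

namespace GNMR
open Network Relation Set

inductive VW (r : ℕ) : Type
  | root
  | u (i : Fin r)
  | la (i : Fin r)
  | v (i : Fin r)
  | lb (i : Fin r)
  | w (i : Fin r)
  | lc (i : Fin r)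
  | h1
  | h2
deriving DecidableEq, Fintype

namespace Witness

variable {r : ℕ}

/-- edge relation of the witness network -/
def EW : VW r → VW r → Prop
  | .root, .u i => i.val = 0
  | .root, .v i => i.val = 0
  | .u i, .la j => i = j
  | .u i, .u j => j.val = i.val + 1
  | .u i, .h1 => i.val = r - 1
  | .v i, .lb j => i = j
  | .v i, .v j => j.val = i.val + 1
  | .v i, .h1 => i.val = r - 1
  | .v i, .h2 => i.val = r - 1
  | .h1, .w i => i.val = 0
  | .w i, .lc j => i = j
  | .w i, .w j => j.val = i.val + 1
  | .w i, .h2 => i.val = r - 1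
  | _, _ => False

def labW : VW r → Option (Tax r)
  | .la i => some (.a i)
  | .lb i => some (.b i)
  | .lc i => some (.c i)
  | .h2 => some .e
  | _ => none

def NW (r : ℕ) : Network (VW r) (Tax r) :=
  ⟨{p | EW p.1 p.2}, .root, labW⟩

def rank : VW r → ℕ
  | .root => 0
  | .u i => i.val + 1
  | .la i => i.val + 2
  | .v i => i.val + 1
  | .lb i => i.val + 2
  | .h1 => r + 1
  | .w i => r + 2 + i.val
  | .lc i => r + 3 + i.val
  | .h2 => 2 * r + 2

lemma edge_rank {x y : VW r} (h : EW x y) : rank x < rank y := by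
  cases x <;> cases y <;> simp only [EW, rank] at h ⊢ <;>
    first
      | exact absurd h (fun hh => hh)
      | (try subst h); omega
      | (rename_i i j; have := j.isLt; have := i.isLt; omega)

end Witness

end GNMR

namespace GNMR
namespace Witness
open Network Relation Set

variable {r : ℕ}

lemma mem_NW {x y : VW r} : (x, y) ∈ (NW r).edges ↔ EW x y := Iff.rfl

lemma inset_eq {t : VW r} (p0 : VW r) (hp0 : EW p0 t)
    (huniq : ∀ x, EW x t → x = p0) :
    {e ∈ (NW r).edges | e.2 = t} = {(p0, t)} := by
  ext ⟨x, y⟩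
  simp only [Set.mem_setOf_eq, Set.mem_singleton_iff, Prod.mk.injEq]
  constructor
  · rintro ⟨hE, rfl⟩
    exact ⟨huniq x hE, rfl⟩
  · rintro ⟨rfl, rfl⟩
    exact ⟨hp0, rfl⟩

lemma indeg_eq_one {t : VW r} (p0 : VW r) (hp0 : EW p0 t)
    (huniq : ∀ x, EW x t → x = p0) : (NW r).indeg t = 1 := by
  unfold Network.indeg
  rw [inset_eq p0 hp0 huniq, Set.ncard_singleton]

lemma inset_pair {t : VW r} (p0 p1 : VW r) (h0 : EW p0 t) (h1 : EW p1 t)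
    (huniq : ∀ x, EW x t → x = p0 ∨ x = p1) :
    {e ∈ (NW r).edges | e.2 = t} = {(p0, t), (p1, t)} := by
  ext ⟨x, y⟩
  simp only [Set.mem_setOf_eq, Set.mem_insert_iff, Set.mem_singleton_iff, Prod.mk.injEq]
  constructor
  · rintro ⟨hE, rfl⟩
    rcases huniq x hE with rfl | rfl
    · exact Or.inl ⟨rfl, rfl⟩
    · exact Or.inr ⟨rfl, rfl⟩
  · rintro (⟨rfl, rfl⟩ | ⟨rfl, rfl⟩)
    · exact ⟨h0, rfl⟩
    · exact ⟨h1, rfl⟩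

lemma indeg_eq_two {t : VW r} (p0 p1 : VW r) (hne : p0 ≠ p1) (h0 : EW p0 t)
    (h1 : EW p1 t) (huniq : ∀ x, EW x t → x = p0 ∨ x = p1) : (NW r).indeg t = 2 := by
  unfold Network.indeg
  rw [inset_pair p0 p1 h0 h1 huniq]
  rw [Set.ncard_pair (by simp [hne])]

lemma indeg_root : (NW r).indeg (VW.root) = 0 := by
  unfold Network.indeg
  have h : {e ∈ (NW r).edges | e.2 = (VW.root : VW r)} = ∅ := by
    ext ⟨x, y⟩
    simp only [Set.mem_setOf_eq, Set.mem_empty_iff_false, iff_false, not_and]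
    rintro hE rfl
    cases x <;> exact hE
  rw [h, Set.ncard_empty]

lemma indeg_u (i : Fin r) : (NW r).indeg (VW.u i) = 1 := by
  rcases Nat.eq_zero_or_pos i.val with h0 | h0
  · apply indeg_eq_one VW.root (by simpa [EW] using h0)
    intro x hx
    cases x <;> simp only [EW] at hx
    · rfl
    · rename_i j
      exact absurd hx (by omega)
  · apply indeg_eq_one (VW.u ⟨i.val - 1, by omega⟩)
      (by simp only [EW]; omega)
    intro x hx
    cases x <;> simp only [EW] at hx
    · exact absurd hx (by omega)
    · rename_i j
      have hx' : (i : ℕ) = (j : ℕ) + 1 := hx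
      congr 1
      exact Fin.ext (show (j : ℕ) = (i : ℕ) - 1 by omega)

lemma indeg_v (i : Fin r) : (NW r).indeg (VW.v i) = 1 := by
  rcases Nat.eq_zero_or_pos i.val with h0 | h0
  · apply indeg_eq_one VW.root (by simpa [EW] using h0)
    intro x hx
    cases x <;> simp only [EW] at hx
    · rfl
    · rename_i j
      exact absurd hx (by omega)
  · apply indeg_eq_one (VW.v ⟨i.val - 1, by omega⟩)
      (by simp only [EW]; omega)
    intro x hx
    cases x <;> simp only [EW] at hx
    · exact absurd hx (by omega)
    · rename_i j
      have hx' : (i : ℕ) = (j : ℕ) + 1 := hx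
      congr 1
      exact Fin.ext (show (j : ℕ) = (i : ℕ) - 1 by omega)

lemma indeg_w (i : Fin r) : (NW r).indeg (VW.w i) = 1 := by
  rcases Nat.eq_zero_or_pos i.val with h0 | h0
  · apply indeg_eq_one VW.h1 (by simpa [EW] using h0)
    intro x hx
    cases x <;> simp only [EW] at hx
    · rename_i j
      exact absurd hx (by omega)
    · rfl
  · apply indeg_eq_one (VW.w ⟨i.val - 1, by omega⟩)
      (by simp only [EW]; omega)
    intro x hx
    cases x <;> simp only [EW] at hx
    · rename_i j
      have hx' : (i : ℕ) = (j : ℕ) + 1 := hx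
      congr 1
      exact Fin.ext (show (j : ℕ) = (i : ℕ) - 1 by omega)
    · exact absurd hx (by omega)

lemma indeg_la (i : Fin r) : (NW r).indeg (VW.la i) = 1 := by
  apply indeg_eq_one (VW.u i) (by simp [EW])
  intro x hx
  cases x <;> simp only [EW] at hx
  rename_i j
  exact congrArg VW.u hx

lemma indeg_lb (i : Fin r) : (NW r).indeg (VW.lb i) = 1 := by
  apply indeg_eq_one (VW.v i) (by simp [EW])
  intro x hx
  cases x <;> simp only [EW] at hx
  rename_i j
  exact congrArg VW.v hx

lemma indeg_lc (i : Fin r) : (NW r).indeg (VW.lc i) = 1 := by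
  apply indeg_eq_one (VW.w i) (by simp [EW])
  intro x hx
  cases x <;> simp only [EW] at hx
  rename_i j
  exact congrArg VW.w hx

lemma indeg_h1 (hr : 2 ≤ r) : (NW r).indeg (VW.h1) = 2 := by
  apply indeg_eq_two (VW.u (ilast r hr)) (VW.v (ilast r hr)) (by simp)
    (by simp [EW, ilast]) (by simp [EW, ilast])
  intro x hx
  cases x <;> simp only [EW] at hx
  · exact Or.inl (by simp [ilast, Fin.ext_iff, hx])
  · exact Or.inr (by simp [ilast, Fin.ext_iff, hx])

lemma indeg_h2 (hr : 2 ≤ r) : (NW r).indeg (VW.h2) = 2 := by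
  apply indeg_eq_two (VW.v (ilast r hr)) (VW.w (ilast r hr)) (by simp)
    (by simp [EW, ilast]) (by simp [EW, ilast])
  intro x hx
  cases x <;> simp only [EW] at hx
  · exact Or.inl (by simp [ilast, Fin.ext_iff, hx])
  · exact Or.inr (by simp [ilast, Fin.ext_iff, hx])

end Witness
end GNMR

namespace GNMR
open Network Relation Set

section Count2

variable {V' α' : Type}

lemma retnum_eq_two {N : Network V' α'} (hN : N.IsNetwork) {x y : V'}
    (hxy : x ≠ y) (hx : N.indeg x = 2) (hy : N.indeg y = 2)
    (hother : ∀ v, v ≠ x → v ≠ y → N.indeg v ≤ 1) :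
    N.reticulationNumber = 2 := by
  classical
  have hfinW : Finite V' := finiteV hN
  have hPfin : ({v | 0 < N.indeg v} : Set V').Finite := Set.toFinite _
  have hEfin := hN.1
  set EF : Finset (V' × V') := hEfin.toFinset with hEF
  set PF : Finset V' := hPfin.toFinset with hPF
  have hfiber : ∀ v, (EF.filter (fun e => e.2 = v)).card = N.indeg v := by
    intro v
    unfold Network.indeg
    rw [← Set.ncard_coe_finset]
    congr 1
    ext e
    simp only [Finset.coe_filter, Set.mem_setOf_eq, hEF, Set.Finite.mem_toFinset]
  have hmapsto : ∀ e ∈ EF, e.2 ∈ PF := by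
    intro e he
    rw [Set.Finite.mem_toFinset] at he
    rw [hPF, Set.Finite.mem_toFinset]
    have : e ∈ {e' ∈ N.edges | e'.2 = e.2} := ⟨he, rfl⟩
    have hpos : 0 < {e' ∈ N.edges | e'.2 = e.2}.ncard :=
      (Set.ncard_pos (indegSet_finite hN _)).mpr ⟨e, this⟩
    exact hpos
  have hcardsum : EF.card = ∑ v ∈ PF, (EF.filter (fun e => e.2 = v)).card :=
    Finset.card_eq_sum_card_fiberwise hmapsto
  have hxP : x ∈ PF := by rw [hPF, Set.Finite.mem_toFinset]; simp only [Set.mem_setOf_eq]; omega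
  have hyPF : y ∈ PF := by rw [hPF, Set.Finite.mem_toFinset]; simp only [Set.mem_setOf_eq]; omega
  have hyP : y ∈ PF.erase x := Finset.mem_erase.mpr ⟨hxy.symm, hyPF⟩
  have hsum : ∑ v ∈ PF, N.indeg v = PF.card + 2 := by
    rw [← Finset.add_sum_erase _ _ hxP, ← Finset.add_sum_erase _ _ hyP]
    have hrest : ∑ v ∈ (PF.erase x).erase y, N.indeg v = ((PF.erase x).erase y).card := by
      rw [Finset.card_eq_sum_ones]
      apply Finset.sum_congr rfl
      intro v hv
      rw [Finset.mem_erase, Finset.mem_erase] at hv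
      have h1 := hother v hv.2.1 hv.1
      have h2 : 0 < N.indeg v := by
        have h3 := hv.2.2
        rw [hPF, Set.Finite.mem_toFinset] at h3
        exact h3
      omega
    rw [hrest, hx, hy]
    rw [Finset.card_erase_of_mem hyP, Finset.card_erase_of_mem hxP]
    have h2 : 1 < PF.card := Finset.one_lt_card.mpr ⟨x, hxP, y, hyPF, hxy⟩
    omega
  have hEcard : N.edges.ncard = PF.card + 2 := by
    rw [Set.ncard_eq_toFinset_card _ hEfin, ← hEF, hcardsum]
    rw [Finset.sum_congr rfl (fun v _ => hfiber v), hsum]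
  have hPcard : ({v | 0 < N.indeg v} : Set V').ncard = PF.card := by
    rw [Set.ncard_eq_toFinset_card _ hPfin]
  unfold Network.reticulationNumber
  rw [hEcard, hPcard]
  omega

end Count2

namespace Witness

variable {r : ℕ}

lemma reach_chain_fin {V' : Type} {E' : Set (V' × V')} {g : Fin r → V'}
    (hstep : ∀ j k : Fin r, (k : ℕ) = (j : ℕ) + 1 → (g j, g k) ∈ E') :
    ∀ i j : Fin r, i ≤ j → reachesIn E' (g i) (g j) := by
  intro i j hij
  obtain ⟨d, hd⟩ : ∃ d, (j : ℕ) = (i : ℕ) + d := ⟨(j : ℕ) - (i : ℕ), by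
    rw [Fin.le_def] at hij; omega⟩
  clear hij
  induction d generalizing j with
  | zero =>
    have h0 : i = j := Fin.ext (by omega)
    rw [← h0]
    exact .refl
  | succ d IH =>
    have hd' : (i : ℕ) + d < r := by have := j.isLt; omega
    have h1 := IH ⟨(i : ℕ) + d, by omega⟩ (by simp)
    exact h1.tail (hstep ⟨(i : ℕ) + d, by omega⟩ j (by simp; omega))

lemma acyclic_NW : ∀ x : VW r, ¬ Relation.TransGen (fun a b => (a, b) ∈ (NW r).edges) x x := by
  have hmono : ∀ x y : VW r, Relation.TransGen (fun a b => (a, b) ∈ (NW r).edges) x y →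
      rank x < rank y := by
    intro x y h
    induction h with
    | single h => exact edge_rank h
    | tail _ h2 IH => exact IH.trans (edge_rank h2)
  intro x hx
  exact lt_irrefl _ (hmono x x hx)

lemma reach_NW (hr : 2 ≤ r) : ∀ x : VW r, reachesIn (NW r).edges (NW r).root x := by
  have h0r : 0 < r := by omega
  have hstepu : ∀ j k : Fin r, (k : ℕ) = (j : ℕ) + 1 →
      ((VW.u j, VW.u k) : VW r × VW r) ∈ (NW r).edges := fun j k h => h
  have hstepv : ∀ j k : Fin r, (k : ℕ) = (j : ℕ) + 1 →
      ((VW.v j, VW.v k) : VW r × VW r) ∈ (NW r).edges := fun j k h => h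
  have hstepw : ∀ j k : Fin r, (k : ℕ) = (j : ℕ) + 1 →
      ((VW.w j, VW.w k) : VW r × VW r) ∈ (NW r).edges := fun j k h => h
  have hu : ∀ i : Fin r, reachesIn (NW r).edges (NW r).root (VW.u i) := by
    intro i
    have h1 : ((VW.root, VW.u ⟨0, h0r⟩) : VW r × VW r) ∈ (NW r).edges := rfl
    exact Relation.ReflTransGen.head h1
      (reach_chain_fin hstepu ⟨0, h0r⟩ i (by simp [Fin.le_def]))
  have hv : ∀ i : Fin r, reachesIn (NW r).edges (NW r).root (VW.v i) := by
    intro i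
    have h1 : ((VW.root, VW.v ⟨0, h0r⟩) : VW r × VW r) ∈ (NW r).edges := rfl
    exact Relation.ReflTransGen.head h1
      (reach_chain_fin hstepv ⟨0, h0r⟩ i (by simp [Fin.le_def]))
  have hh1 : reachesIn (NW r).edges (NW r).root VW.h1 := by
    refine (hu (ilast r hr)).tail ?_
    show EW (VW.u (ilast r hr)) VW.h1
    simp [EW, ilast]
  have hw : ∀ i : Fin r, reachesIn (NW r).edges (NW r).root (VW.w i) := by
    intro i
    have h1 : ((VW.h1, VW.w ⟨0, h0r⟩) : VW r × VW r) ∈ (NW r).edges := rfl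
    exact (hh1.tail h1).trans
      (reach_chain_fin hstepw ⟨0, h0r⟩ i (by simp [Fin.le_def]))
  intro x
  cases x with
  | root => exact .refl
  | u i => exact hu i
  | la i => exact (hu i).tail (show EW (VW.u i) (VW.la i) from rfl)
  | v i => exact hv i
  | lb i => exact (hv i).tail (show EW (VW.v i) (VW.lb i) from rfl)
  | w i => exact hw i
  | lc i => exact (hw i).tail (show EW (VW.w i) (VW.lc i) from rfl)
  | h1 => exact hh1
  | h2 =>
    refine (hv (ilast r hr)).tail ?_
    show EW (VW.v (ilast r hr)) VW.h2
    simp [EW, ilast]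

lemma leaf_iff (hr : 2 ≤ r) : ∀ x : VW r, ((NW r).label x).isSome ↔ (NW r).IsLeaf x := by
  have h0r : 0 < r := by omega
  have hleaf : ∀ x : VW r, (∀ y, ¬ EW x y) → (NW r).IsLeaf x := by
    intro x hx
    unfold Network.IsLeaf Network.outdeg
    have h : {e ∈ (NW r).edges | e.1 = x} = ∅ := by
      ext ⟨a, b⟩
      simp only [Set.mem_setOf_eq, Set.mem_empty_iff_false, iff_false, not_and]
      rintro hE rfl
      exact hx b hE
    rw [h, Set.ncard_empty]
  have hnonleaf : ∀ x : VW r, ∀ y, EW x y → ¬ (NW r).IsLeaf x := by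
    intro x y hxy hl
    unfold Network.IsLeaf Network.outdeg at hl
    have hpos : 0 < {e ∈ (NW r).edges | e.1 = x}.ncard := by
      rw [Set.ncard_pos]
      exact ⟨(x, y), hxy, rfl⟩
    omega
  intro x
  cases x with
  | root =>
    simp only [NW, labW, Option.isSome_none, Bool.false_eq_true, false_iff]
    exact hnonleaf _ (VW.u ⟨0, h0r⟩) rfl
  | u i =>
    simp only [NW, labW, Option.isSome_none, Bool.false_eq_true, false_iff]
    exact hnonleaf _ (VW.la i) rfl
  | la i =>
    simp only [NW, labW, Option.isSome_some, true_iff]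
    exact hleaf _ (fun y => by cases y <;> exact fun h => h)
  | v i =>
    simp only [NW, labW, Option.isSome_none, Bool.false_eq_true, false_iff]
    exact hnonleaf _ (VW.lb i) rfl
  | lb i =>
    simp only [NW, labW, Option.isSome_some, true_iff]
    exact hleaf _ (fun y => by cases y <;> exact fun h => h)
  | w i =>
    simp only [NW, labW, Option.isSome_none, Bool.false_eq_true, false_iff]
    exact hnonleaf _ (VW.lc i) rfl
  | lc i =>
    simp only [NW, labW, Option.isSome_some, true_iff]
    exact hleaf _ (fun y => by cases y <;> exact fun h => h)
  | h1 =>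
    simp only [NW, labW, Option.isSome_none, Bool.false_eq_true, false_iff]
    exact hnonleaf _ (VW.w ⟨0, h0r⟩) rfl
  | h2 =>
    simp only [NW, labW, Option.isSome_some, true_iff]
    exact hleaf _ (fun y => by cases y <;> exact fun h => h)

lemma label_unique : ∀ t : Tax r, ∃! x : VW r, (NW r).label x = some t := by
  intro t
  cases t with
  | a i =>
    refine ⟨VW.la i, rfl, ?_⟩
    intro y hy
    cases y
    case la j =>
      have h1 := Option.some.inj hy
      have h2 : j = i := by injection h1
      exact congrArg VW.la h2
    all_goals exact absurd hy (by simp [NW, labW])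
  | b i =>
    refine ⟨VW.lb i, rfl, ?_⟩
    intro y hy
    cases y
    case lb j =>
      have h1 := Option.some.inj hy
      have h2 : j = i := by injection h1
      exact congrArg VW.lb h2
    all_goals exact absurd hy (by simp [NW, labW])
  | c i =>
    refine ⟨VW.lc i, rfl, ?_⟩
    intro y hy
    cases y
    case lc j =>
      have h1 := Option.some.inj hy
      have h2 : j = i := by injection h1
      exact congrArg VW.lc h2
    all_goals exact absurd hy (by simp [NW, labW])
  | e =>
    refine ⟨VW.h2, rfl, ?_⟩
    intro y hy
    cases y
    case h2 => rfl
    all_goals exact absurd hy (by simp [NW, labW])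

lemma isNetwork_NW (hr : 2 ≤ r) : (NW r).IsNetwork :=
  ⟨Set.toFinite _, reach_NW hr, acyclic_NW, indeg_root, leaf_iff hr, label_unique⟩

lemma retnum_NW (hr : 2 ≤ r) : (NW r).reticulationNumber = 2 := by
  refine retnum_eq_two (isNetwork_NW hr) (x := VW.h1) (y := VW.h2) (by simp)
    (indeg_h1 hr) (indeg_h2 hr) ?_
  intro v hv1 hv2
  cases v with
  | root => rw [indeg_root]; omega
  | u i => rw [indeg_u]
  | la i => rw [indeg_la]
  | v i => rw [indeg_v]
  | lb i => rw [indeg_lb]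
  | w i => rw [indeg_w]
  | lc i => rw [indeg_lc]
  | h1 => exact absurd rfl hv1
  | h2 => exact absurd rfl hv2

end Witness
end GNMR

namespace GNMR
namespace Witness
open Network Relation Set

variable {r : ℕ}

lemma retic_h1 (hr : 2 ≤ r) : (NW r).IsReticulation VW.h1 := by
  unfold Network.IsReticulation; rw [indeg_h1 hr]

lemma retic_h2 (hr : 2 ≤ r) : (NW r).IsReticulation VW.h2 := by
  unfold Network.IsReticulation; rw [indeg_h2 hr]

lemma retic_NW {x : VW r} (hx : (NW r).IsReticulation x) :
    x = VW.h1 ∨ x = VW.h2 := by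
  unfold Network.IsReticulation at hx
  cases x
  case h1 => exact Or.inl rfl
  case h2 => exact Or.inr rfl
  case root => rw [indeg_root] at hx; omega
  case u i => rw [indeg_u] at hx; omega
  case la i => rw [indeg_la] at hx; omega
  case v i => rw [indeg_v] at hx; omega
  case lb i => rw [indeg_lb] at hx; omega
  case w i => rw [indeg_w] at hx; omega
  case lc i => rw [indeg_lc] at hx; omega

lemma inset_h1_NW (hr : 2 ≤ r) : {e ∈ (NW r).edges | e.2 = VW.h1} =
    {(VW.u (ilast r hr), VW.h1), (VW.v (ilast r hr), VW.h1)} := by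
  apply inset_pair (VW.u (ilast r hr)) (VW.v (ilast r hr))
    (by simp [EW, ilast]) (by simp [EW, ilast])
  intro x hx
  cases x <;> simp only [EW] at hx
  · exact Or.inl (congrArg VW.u (Fin.ext (by simp [ilast, hx])))
  · exact Or.inr (congrArg VW.v (Fin.ext (by simp [ilast, hx])))

lemma inset_h2_NW (hr : 2 ≤ r) : {e ∈ (NW r).edges | e.2 = VW.h2} =
    {(VW.v (ilast r hr), VW.h2), (VW.w (ilast r hr), VW.h2)} := by
  apply inset_pair (VW.v (ilast r hr)) (VW.w (ilast r hr))
    (by simp [EW, ilast]) (by simp [EW, ilast])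
  intro x hx
  cases x <;> simp only [EW] at hx
  · exact Or.inl (congrArg VW.v (Fin.ext (by simp [ilast, hx])))
  · exact Or.inr (congrArg VW.w (Fin.ext (by simp [ilast, hx])))

lemma sep_diff_comm (E D : Set (VW r × VW r)) (P : VW r × VW r → Prop) :
    {e ∈ E \ D | P e} = {e ∈ E | P e} \ D := by
  ext e
  simp only [Set.mem_setOf_eq, Set.mem_diff]
  tauto

lemma pair_diff_left {α' : Type} {a b : α'} {D : Set α'} (ha : a ∉ D) (hb : b ∈ D) :
    ({a, b} : Set α') \ D = {a} := by
  ext e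
  simp only [Set.mem_diff, Set.mem_insert_iff, Set.mem_singleton_iff]
  constructor
  · rintro ⟨h1 | h1, h2⟩
    · exact h1
    · exact absurd (h1 ▸ hb) h2
  · rintro rfl
    exact ⟨Or.inl rfl, ha⟩

lemma pair_diff_right {α' : Type} {a b : α'} {D : Set α'} (hb : b ∉ D) (ha : a ∈ D) :
    ({a, b} : Set α') \ D = {b} := by
  ext e
  simp only [Set.mem_diff, Set.mem_insert_iff, Set.mem_singleton_iff]
  constructor
  · rintro ⟨h1 | h1, h2⟩
    · exact absurd (h1 ▸ ha) h2
    · exact h1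
  · rintro rfl
    exact ⟨Or.inr rfl, hb⟩

lemma not_rem {d1 d2 : VW r × VW r} (h1 : d1.2 = VW.h1) (h2 : d2.2 = VW.h2)
    {x y : VW r} (hy1 : y ≠ VW.h1) (hy2 : y ≠ VW.h2) :
    (x, y) ∉ ({d1, d2} : Set (VW r × VW r)) := by
  rintro (h | h)
  · exact hy1 (by rw [show y = (x, y).2 from rfl, h, h1])
  · rw [Set.mem_singleton_iff] at h
    exact hy2 (by rw [show y = (x, y).2 from rfl, h, h2])

/-- the three switchings -/
def EAB (r : ℕ) (hr : 2 ≤ r) : Set (VW r × VW r) :=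
  (NW r).edges \ {(VW.v (ilast r hr), VW.h1), (VW.w (ilast r hr), VW.h2)}

def EAC (r : ℕ) (hr : 2 ≤ r) : Set (VW r × VW r) :=
  (NW r).edges \ {(VW.v (ilast r hr), VW.h1), (VW.v (ilast r hr), VW.h2)}

def EBB (r : ℕ) (hr : 2 ≤ r) : Set (VW r × VW r) :=
  (NW r).edges \ {(VW.u (ilast r hr), VW.h1), (VW.w (ilast r hr), VW.h2)}

lemma sw_parts (hr : 2 ≤ r) (d1 d2 : VW r × VW r)
    (hd1 : d1.2 = VW.h1) (hd2 : d2.2 = VW.h2)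
    (k1 k2 : VW r × VW r)
    (hk1 : {e ∈ (NW r).edges | e.2 = VW.h1} \ ({d1, d2} : Set (VW r × VW r)) = {k1})
    (hk2 : {e ∈ (NW r).edges | e.2 = VW.h2} \ ({d1, d2} : Set (VW r × VW r)) = {k2}) :
    (NW r).Switching ((NW r).edges \ {d1, d2}) := by
  refine ⟨Set.diff_subset, ?_, ?_⟩
  · rintro e heE hnr
    refine ⟨heE, ?_⟩
    rintro (h | h)
    · exact hnr (by rw [show e.2 = VW.h1 from by rw [h, hd1]]; exact retic_h1 hr)
    · rw [Set.mem_singleton_iff] at h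
      exact hnr (by rw [show e.2 = VW.h2 from by rw [h, hd2]]; exact retic_h2 hr)
  · intro v hv
    rcases retic_NW hv with rfl | rfl
    · rw [sep_diff_comm, hk1, Set.ncard_singleton]
    · rw [sep_diff_comm, hk2, Set.ncard_singleton]

lemma swAB (hr : 2 ≤ r) : (NW r).Switching (EAB r hr) := by
  refine sw_parts hr _ _ rfl rfl (VW.u (ilast r hr), VW.h1) (VW.v (ilast r hr), VW.h2) ?_ ?_
  · rw [inset_h1_NW hr]
    exact pair_diff_left (by simp) (by simp)
  · rw [inset_h2_NW hr]
    exact pair_diff_left (by simp) (by simp)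

lemma swAC (hr : 2 ≤ r) : (NW r).Switching (EAC r hr) := by
  refine sw_parts hr _ _ rfl rfl (VW.u (ilast r hr), VW.h1) (VW.w (ilast r hr), VW.h2) ?_ ?_
  · rw [inset_h1_NW hr]
    exact pair_diff_left (by simp) (by simp)
  · rw [inset_h2_NW hr]
    exact pair_diff_right (by simp) (by simp)

lemma swBB (hr : 2 ≤ r) : (NW r).Switching (EBB r hr) := by
  refine sw_parts hr _ _ rfl rfl (VW.v (ilast r hr), VW.h1) (VW.v (ilast r hr), VW.h2) ?_ ?_
  · rw [inset_h1_NW hr]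
    exact pair_diff_right (by simp) (by simp)
  · rw [inset_h2_NW hr]
    exact pair_diff_left (by simp) (by simp)

end Witness
end GNMR

namespace GNMR
namespace Witness
open Network Relation Set

variable {r : ℕ}

lemma reach_subset_inv {V' : Type} {E' : Set (V' × V')} {z : V'} {D : Set V'} (hz : z ∈ D)
    (hcl : ∀ x ∈ D, ∀ y, (x, y) ∈ E' → y ∈ D) :
    ∀ x, reachesIn E' z x → x ∈ D := by
  intro x h
  induction h with
  | refl => exact hz
  | tail _ h2 IH => exact hcl _ IH _ h2

section ReachSw

variable {d1 d2 : VW r × VW r}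

lemma stepu (hd1 : d1.2 = VW.h1) (hd2 : d2.2 = VW.h2) :
    ∀ jj kk : Fin r, (kk : ℕ) = (jj : ℕ) + 1 →
      ((VW.u jj, VW.u kk) : VW r × VW r) ∈ (NW r).edges \ {d1, d2} :=
  fun _ _ h => ⟨h, not_rem hd1 hd2 (fun h => by cases h) (fun h => by cases h)⟩

lemma stepv (hd1 : d1.2 = VW.h1) (hd2 : d2.2 = VW.h2) :
    ∀ jj kk : Fin r, (kk : ℕ) = (jj : ℕ) + 1 →
      ((VW.v jj, VW.v kk) : VW r × VW r) ∈ (NW r).edges \ {d1, d2} :=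
  fun _ _ h => ⟨h, not_rem hd1 hd2 (fun h => by cases h) (fun h => by cases h)⟩

lemma stepw (hd1 : d1.2 = VW.h1) (hd2 : d2.2 = VW.h2) :
    ∀ jj kk : Fin r, (kk : ℕ) = (jj : ℕ) + 1 →
      ((VW.w jj, VW.w kk) : VW r × VW r) ∈ (NW r).edges \ {d1, d2} :=
  fun _ _ h => ⟨h, not_rem hd1 hd2 (fun h => by cases h) (fun h => by cases h)⟩

lemma r_u_la (hd1 : d1.2 = VW.h1) (hd2 : d2.2 = VW.h2) {i j : Fin r} (hij : i ≤ j) :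
    reachesIn ((NW r).edges \ {d1, d2}) (VW.u i) (VW.la j) :=
  (reach_chain_fin (stepu hd1 hd2) i j hij).tail
    ⟨rfl, not_rem hd1 hd2 (fun h => by cases h) (fun h => by cases h)⟩

lemma r_v_lb (hd1 : d1.2 = VW.h1) (hd2 : d2.2 = VW.h2) {i j : Fin r} (hij : i ≤ j) :
    reachesIn ((NW r).edges \ {d1, d2}) (VW.v i) (VW.lb j) :=
  (reach_chain_fin (stepv hd1 hd2) i j hij).tail
    ⟨rfl, not_rem hd1 hd2 (fun h => by cases h) (fun h => by cases h)⟩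

lemma r_w_lc (hd1 : d1.2 = VW.h1) (hd2 : d2.2 = VW.h2) {i j : Fin r} (hij : i ≤ j) :
    reachesIn ((NW r).edges \ {d1, d2}) (VW.w i) (VW.lc j) :=
  (reach_chain_fin (stepw hd1 hd2) i j hij).tail
    ⟨rfl, not_rem hd1 hd2 (fun h => by cases h) (fun h => by cases h)⟩

lemma r_u_h1 (hr : 2 ≤ r) (hd1 : d1.2 = VW.h1) (hd2 : d2.2 = VW.h2)
    (hk : ((VW.u (ilast r hr), VW.h1) : VW r × VW r) ∈ (NW r).edges \ {d1, d2}) (i : Fin r) :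
    reachesIn ((NW r).edges \ {d1, d2}) (VW.u i) VW.h1 :=
  (reach_chain_fin (stepu hd1 hd2) i (ilast r hr) (le_ilast hr i)).tail hk

lemma r_v_h1 (hr : 2 ≤ r) (hd1 : d1.2 = VW.h1) (hd2 : d2.2 = VW.h2)
    (hk : ((VW.v (ilast r hr), VW.h1) : VW r × VW r) ∈ (NW r).edges \ {d1, d2}) (i : Fin r) :
    reachesIn ((NW r).edges \ {d1, d2}) (VW.v i) VW.h1 :=
  (reach_chain_fin (stepv hd1 hd2) i (ilast r hr) (le_ilast hr i)).tail hk

lemma r_v_h2 (hr : 2 ≤ r) (hd1 : d1.2 = VW.h1) (hd2 : d2.2 = VW.h2)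
    (hk : ((VW.v (ilast r hr), VW.h2) : VW r × VW r) ∈ (NW r).edges \ {d1, d2}) (i : Fin r) :
    reachesIn ((NW r).edges \ {d1, d2}) (VW.v i) VW.h2 :=
  (reach_chain_fin (stepv hd1 hd2) i (ilast r hr) (le_ilast hr i)).tail hk

lemma r_w_h2 (hr : 2 ≤ r) (hd1 : d1.2 = VW.h1) (hd2 : d2.2 = VW.h2)
    (hk : ((VW.w (ilast r hr), VW.h2) : VW r × VW r) ∈ (NW r).edges \ {d1, d2}) (i : Fin r) :
    reachesIn ((NW r).edges \ {d1, d2}) (VW.w i) VW.h2 :=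
  (reach_chain_fin (stepw hd1 hd2) i (ilast r hr) (le_ilast hr i)).tail hk

lemma r_h1_w (hr : 2 ≤ r) (hd1 : d1.2 = VW.h1) (hd2 : d2.2 = VW.h2) (j : Fin r) :
    reachesIn ((NW r).edges \ {d1, d2}) VW.h1 (VW.w j) := by
  have h0r : 0 < r := by omega
  refine Relation.ReflTransGen.head
    (⟨rfl, not_rem hd1 hd2 (fun h => by cases h) (fun h => by cases h)⟩ :
      ((VW.h1, VW.w ⟨0, h0r⟩) : VW r × VW r) ∈ (NW r).edges \ {d1, d2}) ?_
  exact reach_chain_fin (stepw hd1 hd2) ⟨0, h0r⟩ j (by simp [Fin.le_def])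

lemma r_h1_lc (hr : 2 ≤ r) (hd1 : d1.2 = VW.h1) (hd2 : d2.2 = VW.h2) (j : Fin r) :
    reachesIn ((NW r).edges \ {d1, d2}) VW.h1 (VW.lc j) :=
  (r_h1_w hr hd1 hd2 j).tail
    ⟨rfl, not_rem hd1 hd2 (fun h => by cases h) (fun h => by cases h)⟩

end ReachSw

end Witness
end GNMR

namespace GNMR
namespace Witness
open Network Relation Set Tax

variable {r : ℕ}

lemma notrem_AB_uh1 (hr : 2 ≤ r) :
    ((VW.u (ilast r hr), VW.h1) : VW r × VW r) ∈ EAB r hr :=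
  ⟨by simp [mem_NW, EW, ilast], by simp⟩

lemma notrem_AB_vh2 (hr : 2 ≤ r) :
    ((VW.v (ilast r hr), VW.h2) : VW r × VW r) ∈ EAB r hr :=
  ⟨by simp [mem_NW, EW, ilast], by simp⟩

lemma notrem_AC_uh1 (hr : 2 ≤ r) :
    ((VW.u (ilast r hr), VW.h1) : VW r × VW r) ∈ EAC r hr :=
  ⟨by simp [mem_NW, EW, ilast], by simp⟩

lemma notrem_AC_wh2 (hr : 2 ≤ r) :
    ((VW.w (ilast r hr), VW.h2) : VW r × VW r) ∈ EAC r hr :=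
  ⟨by simp [mem_NW, EW, ilast], by simp⟩

lemma notrem_BB_vh1 (hr : 2 ≤ r) :
    ((VW.v (ilast r hr), VW.h1) : VW r × VW r) ∈ EBB r hr :=
  ⟨by simp [mem_NW, EW, ilast], by simp⟩

lemma notrem_BB_vh2 (hr : 2 ≤ r) :
    ((VW.v (ilast r hr), VW.h2) : VW r × VW r) ∈ EBB r hr :=
  ⟨by simp [mem_NW, EW, ilast], by simp⟩

lemma clAB_u (hr : 2 ≤ r) (i : Fin r) :
    (NW r).clusterIn (EAB r hr) (VW.u i) = Asuf i ∪ Call := by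
  ext t
  constructor
  · rintro ⟨x, hx, hl⟩
    have hxD := reach_subset_inv (E' := EAB r hr) (z := VW.u i)
      (D := fun x : VW r => match x with
        | .u j => i ≤ j | .la j => i ≤ j | .h1 => True | .w _ => True | .lc _ => True
        | _ => False)
      (le_refl i) ?closed x hx
    case closed =>
      intro x hxD y hy
      obtain ⟨hE, hne⟩ := hy
      have hE' : EW x y := hE
      cases x
      case root => exact hxD.elim
      case v j => exact hxD.elim
      case lb j => exact hxD.elim
      case h2 => exact hxD.elim
      case la j => cases y <;> exact hE'.elim
      case lc j => cases y <;> exact hE'.elim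
      case u j =>
        cases y <;> simp only [EW] at hE'
        case la k => exact hE' ▸ hxD
        case u k =>
          have hxD' : (i : ℕ) ≤ (j : ℕ) := hxD
          show i ≤ k
          rw [Fin.le_def]
          omega
        case h1 => trivial
      case h1 =>
        cases y <;> simp only [EW] at hE'
        case w k => trivial
      case w j =>
        cases y <;> simp only [EW] at hE'
        case lc k => trivial
        case w k => trivial
        case h2 =>
          exact absurd (Or.inr (Set.mem_singleton_iff.mpr
            (congrArg (fun z => (VW.w z, VW.h2)) (Fin.ext (by simp [ilast, hE']))))) hne
    cases x
    case la j =>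
      have ht : Tax.a j = t := Option.some.inj hl
      exact Or.inl (ht ▸ hxD)
    case lc j =>
      have ht : Tax.c j = t := Option.some.inj hl
      exact Or.inr (ht ▸ trivial)
    case u j => exact (Option.some_ne_none t (hl : none = some t).symm).elim
    case h1 => exact (Option.some_ne_none t (hl : none = some t).symm).elim
    case w j => exact (Option.some_ne_none t (hl : none = some t).symm).elim
    case root => exact hxD.elim
    case v j => exact hxD.elim
    case lb j => exact hxD.elim
    case h2 => exact hxD.elim
  · rintro (ht | ht)
    · cases t <;> try exact ht.elim
      case a j => exact ⟨VW.la j, r_u_la rfl rfl ht, rfl⟩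
    · cases t <;> try exact ht.elim
      case c j =>
        exact ⟨VW.lc j, (r_u_h1 hr rfl rfl (notrem_AB_uh1 hr) i).trans
          (r_h1_lc hr rfl rfl j), rfl⟩

lemma clAB_v (hr : 2 ≤ r) (i : Fin r) :
    (NW r).clusterIn (EAB r hr) (VW.v i) = Bsuf i ∪ Esing := by
  ext t
  constructor
  · rintro ⟨x, hx, hl⟩
    have hxD := reach_subset_inv (E' := EAB r hr) (z := VW.v i)
      (D := fun x : VW r => match x with
        | .v j => i ≤ j | .lb j => i ≤ j | .h2 => True | _ => False)
      (le_refl i) ?closed x hx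
    case closed =>
      intro x hxD y hy
      obtain ⟨hE, hne⟩ := hy
      have hE' : EW x y := hE
      cases x
      case root => exact hxD.elim
      case u j => exact hxD.elim
      case la j => exact hxD.elim
      case h1 => exact hxD.elim
      case w j => exact hxD.elim
      case lc j => exact hxD.elim
      case lb j => cases y <;> exact hE'.elim
      case h2 => cases y <;> exact hE'.elim
      case v j =>
        cases y <;> simp only [EW] at hE'
        case lb k => exact hE' ▸ hxD
        case v k =>
          have hxD' : (i : ℕ) ≤ (j : ℕ) := hxD
          show i ≤ k
          rw [Fin.le_def]
          omega
        case h1 =>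
          exact absurd (Or.inl
            (congrArg (fun z => (VW.v z, VW.h1)) (Fin.ext (by simp [ilast, hE'])))) hne
        case h2 => trivial
    cases x
    case lb j =>
      have ht : Tax.b j = t := Option.some.inj hl
      exact Or.inl (ht ▸ hxD)
    case h2 =>
      have ht : Tax.e = t := Option.some.inj hl
      exact Or.inr (ht ▸ trivial)
    case v j => exact (Option.some_ne_none t (hl : none = some t).symm).elim
    case root => exact hxD.elim
    case u j => exact hxD.elim
    case la j => exact hxD.elim
    case h1 => exact hxD.elim
    case w j => exact hxD.elim
    case lc j => exact hxD.elim
  · rintro (ht | ht)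
    · cases t <;> try exact ht.elim
      case b j => exact ⟨VW.lb j, r_v_lb rfl rfl ht, rfl⟩
    · cases t <;> try exact ht.elim
      case e => exact ⟨VW.h2, r_v_h2 hr rfl rfl (notrem_AB_vh2 hr) i, rfl⟩

lemma clAB_w (hr : 2 ≤ r) (i : Fin r) :
    (NW r).clusterIn (EAB r hr) (VW.w i) = Csuf i := by
  ext t
  constructor
  · rintro ⟨x, hx, hl⟩
    have hxD := reach_subset_inv (E' := EAB r hr) (z := VW.w i)
      (D := fun x : VW r => match x with
        | .w j => i ≤ j | .lc j => i ≤ j | _ => False)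
      (le_refl i) ?closed x hx
    case closed =>
      intro x hxD y hy
      obtain ⟨hE, hne⟩ := hy
      have hE' : EW x y := hE
      cases x
      case root => exact hxD.elim
      case u j => exact hxD.elim
      case la j => exact hxD.elim
      case v j => exact hxD.elim
      case lb j => exact hxD.elim
      case h1 => exact hxD.elim
      case h2 => exact hxD.elim
      case lc j => cases y <;> exact hE'.elim
      case w j =>
        cases y <;> simp only [EW] at hE'
        case lc k => exact hE' ▸ hxD
        case w k =>
          have hxD' : (i : ℕ) ≤ (j : ℕ) := hxD
          show i ≤ k
          rw [Fin.le_def]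
          omega
        case h2 =>
          exact absurd (Or.inr (Set.mem_singleton_iff.mpr
            (congrArg (fun z => (VW.w z, VW.h2)) (Fin.ext (by simp [ilast, hE']))))) hne
    cases x
    case lc j =>
      have ht : Tax.c j = t := Option.some.inj hl
      exact ht ▸ hxD
    case w j => exact (Option.some_ne_none t (hl : none = some t).symm).elim
    case root => exact hxD.elim
    case u j => exact hxD.elim
    case la j => exact hxD.elim
    case v j => exact hxD.elim
    case lb j => exact hxD.elim
    case h1 => exact hxD.elim
    case h2 => exact hxD.elim
  · intro ht
    cases t <;> try exact ht.elim
    case c j => exact ⟨VW.lc j, r_w_lc rfl rfl ht, rfl⟩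

lemma clAC_v (hr : 2 ≤ r) (i : Fin r) :
    (NW r).clusterIn (EAC r hr) (VW.v i) = Bsuf i := by
  ext t
  constructor
  · rintro ⟨x, hx, hl⟩
    have hxD := reach_subset_inv (E' := EAC r hr) (z := VW.v i)
      (D := fun x : VW r => match x with
        | .v j => i ≤ j | .lb j => i ≤ j | _ => False)
      (le_refl i) ?closed x hx
    case closed =>
      intro x hxD y hy
      obtain ⟨hE, hne⟩ := hy
      have hE' : EW x y := hE
      cases x
      case root => exact hxD.elim
      case u j => exact hxD.elim
      case la j => exact hxD.elim
      case h1 => exact hxD.elim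
      case w j => exact hxD.elim
      case lc j => exact hxD.elim
      case h2 => exact hxD.elim
      case lb j => cases y <;> exact hE'.elim
      case v j =>
        cases y <;> simp only [EW] at hE'
        case lb k => exact hE' ▸ hxD
        case v k =>
          have hxD' : (i : ℕ) ≤ (j : ℕ) := hxD
          show i ≤ k
          rw [Fin.le_def]
          omega
        case h1 =>
          exact absurd (Or.inl
            (congrArg (fun z => (VW.v z, VW.h1)) (Fin.ext (by simp [ilast, hE'])))) hne
        case h2 =>
          exact absurd (Or.inr (Set.mem_singleton_iff.mpr
            (congrArg (fun z => (VW.v z, VW.h2)) (Fin.ext (by simp [ilast, hE']))))) hne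
    cases x
    case lb j =>
      have ht : Tax.b j = t := Option.some.inj hl
      exact ht ▸ hxD
    case v j => exact (Option.some_ne_none t (hl : none = some t).symm).elim
    case root => exact hxD.elim
    case u j => exact hxD.elim
    case la j => exact hxD.elim
    case h1 => exact hxD.elim
    case w j => exact hxD.elim
    case lc j => exact hxD.elim
    case h2 => exact hxD.elim
  · intro ht
    cases t <;> try exact ht.elim
    case b j => exact ⟨VW.lb j, r_v_lb rfl rfl ht, rfl⟩

lemma clAC_w (hr : 2 ≤ r) (i : Fin r) :
    (NW r).clusterIn (EAC r hr) (VW.w i) = Csuf i ∪ Esing := by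
  ext t
  constructor
  · rintro ⟨x, hx, hl⟩
    have hxD := reach_subset_inv (E' := EAC r hr) (z := VW.w i)
      (D := fun x : VW r => match x with
        | .w j => i ≤ j | .lc j => i ≤ j | .h2 => True | _ => False)
      (le_refl i) ?closed x hx
    case closed =>
      intro x hxD y hy
      obtain ⟨hE, hne⟩ := hy
      have hE' : EW x y := hE
      cases x
      case root => exact hxD.elim
      case u j => exact hxD.elim
      case la j => exact hxD.elim
      case v j => exact hxD.elim
      case lb j => exact hxD.elim
      case h1 => exact hxD.elim
      case lc j => cases y <;> exact hE'.elim
      case h2 => cases y <;> exact hE'.elim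
      case w j =>
        cases y <;> simp only [EW] at hE'
        case lc k => exact hE' ▸ hxD
        case w k =>
          have hxD' : (i : ℕ) ≤ (j : ℕ) := hxD
          show i ≤ k
          rw [Fin.le_def]
          omega
        case h2 => trivial
    cases x
    case lc j =>
      have ht : Tax.c j = t := Option.some.inj hl
      exact Or.inl (ht ▸ hxD)
    case h2 =>
      have ht : Tax.e = t := Option.some.inj hl
      exact Or.inr (ht ▸ trivial)
    case w j => exact (Option.some_ne_none t (hl : none = some t).symm).elim
    case root => exact hxD.elim
    case u j => exact hxD.elim
    case la j => exact hxD.elim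
    case v j => exact hxD.elim
    case lb j => exact hxD.elim
    case h1 => exact hxD.elim
  · rintro (ht | ht)
    · cases t <;> try exact ht.elim
      case c j => exact ⟨VW.lc j, r_w_lc rfl rfl ht, rfl⟩
    · cases t <;> try exact ht.elim
      case e => exact ⟨VW.h2, r_w_h2 hr rfl rfl (notrem_AC_wh2 hr) i, rfl⟩

lemma clBB_v0 (hr : 2 ≤ r) :
    (NW r).clusterIn (EBB r hr) (VW.v ⟨0, by omega⟩) = Ball ∪ Call ∪ Esing := by
  have h0r : 0 < r := by omega
  ext t
  constructor
  · rintro ⟨x, hx, hl⟩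
    have hxD := reach_subset_inv (E' := EBB r hr) (z := VW.v ⟨0, h0r⟩)
      (D := fun x : VW r => match x with
        | .root => False | .u _ => False | .la _ => False | _ => True)
      trivial ?closed x hx
    case closed =>
      intro x hxD y hy
      obtain ⟨hE, hne⟩ := hy
      have hE' : EW x y := hE
      cases x
      case root => exact hxD.elim
      case u j => exact hxD.elim
      case la j => exact hxD.elim
      case lb j => cases y <;> exact hE'.elim
      case lc j => cases y <;> exact hE'.elim
      case h2 => cases y <;> exact hE'.elim
      case v j => cases y <;> first | exact hE'.elim | trivial
      case h1 => cases y <;> first | exact hE'.elim | trivial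
      case w j => cases y <;> first | exact hE'.elim | trivial
    cases x
    case lb j =>
      have ht : Tax.b j = t := Option.some.inj hl
      exact Or.inl (Or.inl (ht ▸ trivial))
    case lc j =>
      have ht : Tax.c j = t := Option.some.inj hl
      exact Or.inl (Or.inr (ht ▸ trivial))
    case h2 =>
      have ht : Tax.e = t := Option.some.inj hl
      exact Or.inr (ht ▸ trivial)
    case root => exact hxD.elim
    case u j => exact hxD.elim
    case la j => exact hxD.elim
    case v j => exact (Option.some_ne_none t (hl : none = some t).symm).elim
    case h1 => exact (Option.some_ne_none t (hl : none = some t).symm).elim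
    case w j => exact (Option.some_ne_none t (hl : none = some t).symm).elim
  · rintro ((ht | ht) | ht)
    · cases t <;> try exact ht.elim
      case b j => exact ⟨VW.lb j, r_v_lb rfl rfl (by simp [Fin.le_def]), rfl⟩
    · cases t <;> try exact ht.elim
      case c j =>
        exact ⟨VW.lc j, (r_v_h1 hr rfl rfl (notrem_BB_vh1 hr) _).trans
          (r_h1_lc hr rfl rfl j), rfl⟩
    · cases t <;> try exact ht.elim
      case e => exact ⟨VW.h2, r_v_h2 hr rfl rfl (notrem_BB_vh2 hr) _, rfl⟩

lemma represents_of_head {V' α' : Type} {N : Network V' α'} (hN : N.IsNetwork)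
    {E' : Set (V' × V')} (hS : N.Switching E') {z : V'} (hz : z ≠ N.root)
    {C0 : Set α'} (hcl : N.clusterIn E' z = C0) : N.Represents C0 := by
  obtain ⟨p, hp⟩ := sw_in_edge hN hS hz
  exact ⟨E', hS, (p, z), hp, hcl⟩

lemma repAll (hr : 2 ≤ r) : (NW r).RepresentsAll (Fam r) := by
  rintro Z (⟨i, rfl⟩ | ⟨i, rfl⟩ | ⟨i, rfl⟩ | ⟨i, rfl⟩ | ⟨i, rfl⟩ | rfl)
  · exact represents_of_head (isNetwork_NW hr) (swAB hr)
      (fun h => by cases h) (clAB_u hr i)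
  · exact represents_of_head (isNetwork_NW hr) (swAC hr)
      (fun h => by cases h) (clAC_v hr i)
  · exact represents_of_head (isNetwork_NW hr) (swAB hr)
      (fun h => by cases h) (clAB_v hr i)
  · exact represents_of_head (isNetwork_NW hr) (swAB hr)
      (fun h => by cases h) (clAB_w hr i)
  · exact represents_of_head (isNetwork_NW hr) (swAC hr)
      (fun h => by cases h) (clAC_w hr i)
  · exact represents_of_head (isNetwork_NW hr) (swBB hr)
      (fun h => by cases h) (clBB_v0 hr)

end Witness
end GNMR

namespace GNMR
open Tax Witness

theorem final :
    ∀ r : ℕ, 2 ≤ r →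
      ∃ (β : Type) (Cr : Set (Set β)),
        (∀ C0 ∈ Cr, C0 ⊂ (Set.univ : Set β) ∧ C0.Nonempty) ∧
        (∃ (W : Type) (N : Network W β),
          N.IsNetwork ∧ N.reticulationNumber = 2 ∧ N.RepresentsAll Cr) ∧
        (∀ (W : Type) (N : Network W β),
          N.IsNetwork → Galled N → N.RepresentsAll Cr →
            r ≤ N.reticulationNumber) := by
  intro r hr
  have h0r : 0 < r := by omega
  refine ⟨Tax r, Fam r, ?_, ⟨VW r, NW r, isNetwork_NW hr, retnum_NW hr, repAll hr⟩,
    fun W N hN hG hRep => lowerBound hr N hN hG hRep⟩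
  rintro C0 (⟨i, rfl⟩ | ⟨i, rfl⟩ | ⟨i, rfl⟩ | ⟨i, rfl⟩ | ⟨i, rfl⟩ | rfl)
  · constructor
    · rw [Set.ssubset_univ_iff]
      intro h
      have h2 : Tax.e ∈ Asuf i ∪ Call := h ▸ Set.mem_univ _
      rcases h2 with h2 | h2 <;> exact h2
    · exact ⟨Tax.c i, Or.inr trivial⟩
  · constructor
    · rw [Set.ssubset_univ_iff]
      intro h
      have h2 : Tax.e ∈ Bsuf i := h ▸ Set.mem_univ _
      exact h2
    · exact ⟨Tax.b i, le_refl i⟩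
  · constructor
    · rw [Set.ssubset_univ_iff]
      intro h
      have h2 : Tax.a i ∈ Bsuf i ∪ Esing := h ▸ Set.mem_univ _
      rcases h2 with h2 | h2 <;> exact h2
    · exact ⟨Tax.b i, Or.inl (le_refl i)⟩
  · constructor
    · rw [Set.ssubset_univ_iff]
      intro h
      have h2 : Tax.e ∈ Csuf i := h ▸ Set.mem_univ _
      exact h2
    · exact ⟨Tax.c i, le_refl i⟩
  · constructor
    · rw [Set.ssubset_univ_iff]
      intro h
      have h2 : Tax.a i ∈ Csuf i ∪ Esing := h ▸ Set.mem_univ _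
      rcases h2 with h2 | h2 <;> exact h2
    · exact ⟨Tax.c i, Or.inl (le_refl i)⟩
  · constructor
    · rw [Set.ssubset_univ_iff]
      intro h
      have h2 : Tax.a ⟨0, h0r⟩ ∈ Ball ∪ Call ∪ Esing := h ▸ Set.mem_univ _
      rcases h2 with (h2 | h2) | h2 <;> exact h2
    · exact ⟨Tax.e, Or.inr trivial⟩

end GNMR

/-- For every `r ≥ 2` there is a taxon set and a cluster set `Cr` on it such that
some network with exactly 2 reticulations represents `Cr` (softwired), while every
galled network representing `Cr` has at least `r` reticulations. -/
theorem galled_needs_many_reticulations :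
    ∀ r : ℕ, 2 ≤ r →
      ∃ (β : Type) (Cr : Set (Set β)),
        (∀ C0 ∈ Cr, C0 ⊂ (Set.univ : Set β) ∧ C0.Nonempty) ∧
        (∃ (W : Type) (N : Network W β),
          N.IsNetwork ∧ N.reticulationNumber = 2 ∧ N.RepresentsAll Cr) ∧
        (∀ (W : Type) (N : Network W β),
          N.IsNetwork → Galled N → N.RepresentsAll Cr →
            r ≤ N.reticulationNumber) :=
  GNMR.final
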